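/- arXiv:2301.05011 — 5 statements merged into one kernel-verified Lean document; each statement's English description precedes it below -/
import Mathlib

section
/- Classical bathtub principle (uniqueness): Let v ∈ L²(Ω) be such that every level set of v is Lebesgue-null, i.e. |{x ∈ Ω : v(x) = λ}| = 0 for all λ ∈ ℝ. Then the maximisation of u ↦ ∫_Ω u·v over Ũ*_L has the unique maximiser u* = χ_{{v > ρ(v)}} (up to a.e. equality), and the maximum value equals ∫_{{v > ρ(v)}} v. -/
open MeasureTheory Filter Set Topology
open scoped ENNReal

/-! If `∫ u = ∫ χ` with `χ = 𝟙_{v > ρ}`, then `∫ u v - ∫ χ v = ∫ (u - χ) (v - ρ)`, and the integrand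
is pointwise nonpositive for `0 ≤ u ≤ 1`: `u - χ ≤ 0` where `v > ρ` and `u - χ ≥ 0` where `v ≤ ρ`.
Equality of the integrals forces `(u - χ) (v - ρ) = 0` a.e., hence `u = χ` off the null set
`{v = ρ}`. Null level sets also make `r ↦ |{v > r}|` continuous, so at its generalized inverse
`ρ` the superlevel set has measure exactly `L |Ω|`, which makes `χ` admissible. -/

namespace MeasureTheory

variable {α : Type*} {u v : α → ℝ} {ρ : ℝ}

lemma indicator_one_mem_unitInterval (S : Set α) (x : α) :
    0 ≤ S.indicator (1 : α → ℝ) x ∧ S.indicator (1 : α → ℝ) x ≤ 1 := by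
  by_cases hx : x ∈ S <;> simp [hx]

lemma sub_indicator_mul_sub_nonpos {x : α} (hu : 0 ≤ u x ∧ u x ≤ 1) :
    (u x - {y | ρ < v y}.indicator 1 x) * (v x - ρ) ≤ 0 := by
  by_cases hx : ρ < v x
  · rw [indicator_of_mem (show x ∈ {y | ρ < v y} from hx), Pi.one_apply]
    exact mul_nonpos_of_nonpos_of_nonneg (by linarith) (by linarith)
  · rw [indicator_of_notMem (show x ∉ {y | ρ < v y} from hx), sub_zero]
    exact mul_nonpos_of_nonneg_of_nonpos hu.1 (by linarith [not_lt.1 hx])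

variable [MeasurableSpace α] {μ : Measure α} {a : ℝ≥0∞}

noncomputable def superlevelQuantile (μ : Measure α) (v : α → ℝ) (a : ℝ≥0∞) : ℝ :=
  sInf {r | μ {x | r < v x} ≤ a}

lemma measure_setOf_lt_le_of_forall_gt (h : ∀ r, ρ < r → μ {x | r < v x} ≤ a) :
    μ {x | ρ < v x} ≤ a := by
  obtain ⟨r, hr_anti, hr_gt, hr_lim⟩ := exists_seq_strictAnti_tendsto ρ
  have hunion : {x | ρ < v x} = ⋃ n, {x | r n < v x} := by
    ext x
    simp only [mem_ofPred_eq, mem_iUnion]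
    exact ⟨fun hx => (hr_lim.eventually (gt_mem_nhds hx)).exists,
      fun ⟨n, hn⟩ => (hr_gt n).trans hn⟩
  have hmono : Monotone fun n => {x | r n < v x} :=
    fun m n hmn x hx => (hr_anti.antitone hmn).trans_lt hx
  rw [hunion, hmono.measure_iUnion]
  exact iSup_le fun n => h _ (hr_gt n)

lemma le_measure_setOf_le_of_forall_lt [IsFiniteMeasure μ] (hv : AEMeasurable v μ)
    (h : ∀ r < ρ, a ≤ μ {x | r < v x}) : a ≤ μ {x | ρ ≤ v x} := by
  obtain ⟨r, hr_mono, hr_lt, hr_lim⟩ := exists_seq_strictMono_tendsto ρ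
  have hinter : {x | ρ ≤ v x} = ⋂ n, {x | r n < v x} := by
    ext x
    simp only [mem_ofPred_eq, mem_iInter]
    exact ⟨fun hx n => (hr_lt n).trans_le hx,
      fun hx => le_of_tendsto' hr_lim fun n => (hx n).le⟩
  have hanti : Antitone fun n => {x | r n < v x} :=
    fun m n hmn x hx => (hr_mono.monotone hmn).trans_lt hx
  rw [hinter, hanti.measure_iInter (fun n => nullMeasurableSet_lt aemeasurable_const hv)
    ⟨0, measure_ne_top _ _⟩]
  exact le_iInf fun n => h _ (hr_lt n)

lemma exists_measure_setOf_lt_le [IsFiniteMeasure μ] (hv : AEMeasurable v μ) (ha : 0 < a) :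
    ∃ r, μ {x | r < v x} ≤ a := by
  have hlim : Tendsto (fun r => μ {x | r < v x}) atTop (𝓝 0) := by
    have := tendsto_measure_iInter_atTop (μ := μ) (s := fun r : ℝ => {x | r < v x})
      (fun r => nullMeasurableSet_lt aemeasurable_const hv)
      (fun r s hrs x hx => hrs.trans_lt hx) ⟨0, measure_ne_top _ _⟩
    rwa [iInter_eq_empty_iff.2 fun x => ⟨v x, lt_irrefl (v x)⟩, measure_empty] at this
  exact (hlim.eventually (gt_mem_nhds ha)).exists.imp fun _ => le_of_lt

lemma bddBelow_setOf_measure_setOf_lt_le (ha : a < μ univ) :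
    BddBelow {r | μ {x | r < v x} ≤ a} := by
  have hlim : Tendsto (fun r => μ {x | r < v x}) atBot (𝓝 (μ univ)) := by
    have := tendsto_measure_iUnion_atBot (μ := μ) (s := fun r : ℝ => {x | r < v x})
      (fun r s hrs x hx => hrs.trans_lt hx)
    rwa [iUnion_eq_univ_iff.2 fun x => ⟨v x - 1, sub_one_lt (v x)⟩] at this
  obtain ⟨r₀, hr₀⟩ := eventually_atBot.1 (hlim.eventually (lt_mem_nhds ha))
  refine ⟨r₀, fun r hr => ?_⟩
  by_contra! hlt
  exact (hr₀ r hlt.le).not_ge hr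

theorem measure_superlevelQuantile_lt [IsFiniteMeasure μ] (hv : AEMeasurable v μ)
    (hlevel : ∀ l, μ {x | v x = l} = 0) (ha₀ : 0 < a) (ha : a < μ univ) :
    μ {x | superlevelQuantile μ v a < v x} = a := by
  set ρ := superlevelQuantile μ v a
  have hbdd := bddBelow_setOf_measure_setOf_lt_le (v := v) ha
  obtain ⟨r₀, hr₀⟩ := exists_measure_setOf_lt_le hv ha₀
  refine le_antisymm (measure_setOf_lt_le_of_forall_gt fun r hr => ?_) ?_
  · obtain ⟨s, hs, hsr⟩ := (csInf_lt_iff hbdd ⟨r₀, hr₀⟩).1 hr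
    exact (measure_mono fun x hx => hsr.trans hx).trans hs
  · calc a ≤ μ {x | ρ ≤ v x} := le_measure_setOf_le_of_forall_lt hv fun r hr =>
          (not_le.1 fun h => hr.not_ge (csInf_le hbdd h)).le
      _ ≤ μ ({x | v x = ρ} ∪ {x | ρ < v x}) :=
          measure_mono fun x hx => (eq_or_lt_of_le hx).imp Eq.symm id
      _ ≤ μ {x | ρ < v x} := by
          simpa only [hlevel ρ, zero_add] using
            measure_union_le (μ := μ) {x | v x = ρ} {x | ρ < v x}

lemma integral_mul_sub_integral_mul_eq {w : α → ℝ} (c : ℝ) (hu : Integrable u μ)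
    (hw : Integrable w μ) (huv : Integrable (fun x => u x * v x) μ)
    (hwv : Integrable (fun x => w x * v x) μ) (h : ∫ x, u x ∂μ = ∫ x, w x ∂μ) :
    ∫ x, u x * v x ∂μ - ∫ x, w x * v x ∂μ = ∫ x, (u x - w x) * (v x - c) ∂μ := by
  have hexpand : (fun x => (u x - w x) * (v x - c))
      = fun x => (u x * v x - w x * v x) - c * (u x - w x) := by
    funext x; ring
  have hdiff : Integrable (fun x => u x * v x - w x * v x) μ := huv.sub hwv
  have hscaled : Integrable (fun x => c * (u x - w x)) μ := (hu.sub hw).const_mul c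
  rw [hexpand, integral_sub hdiff hscaled, integral_sub huv hwv, integral_const_mul,
    integral_sub hu hw, h, sub_self, mul_zero, sub_zero]

lemma Integrable.mul_of_ae_mem_unitInterval (hu : AEStronglyMeasurable u μ)
    (hu01 : ∀ᵐ x ∂μ, 0 ≤ u x ∧ u x ≤ 1) (hv : Integrable v μ) :
    Integrable (fun x => u x * v x) μ :=
  hv.bdd_mul hu (hu01.mono fun _ hx => (Real.norm_of_nonneg hx.1).trans_le hx.2)

lemma AEMeasurable.aestronglyMeasurable_indicator_one_setOf_lt (hv : AEMeasurable v μ) :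
    AEStronglyMeasurable ({y | ρ < v y}.indicator (1 : α → ℝ)) μ :=
  aestronglyMeasurable_one.indicator₀ (nullMeasurableSet_lt aemeasurable_const hv)

lemma integral_indicator_one_mul {S : Set α} (hS : NullMeasurableSet S μ) :
    ∫ x, S.indicator 1 x * v x ∂μ = ∫ x in S, v x ∂μ := by
  have hfun : (fun x => S.indicator 1 x * v x) = S.indicator v := by
    funext x
    by_cases hx : x ∈ S <;> simp [hx]
  rw [hfun, integral_indicator₀ hS]

lemma integral_indicator_one₀ {S : Set α} (hS : NullMeasurableSet S μ) :
    ∫ x, S.indicator (1 : α → ℝ) x ∂μ = μ.real S := by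
  simpa using integral_indicator_one_mul (v := 1) hS

section Bathtub

variable [IsFiniteMeasure μ]

lemma integral_mul_sub_integral_indicator_mul_eq (hv : Integrable v μ)
    (hu : AEStronglyMeasurable u μ) (hu01 : ∀ᵐ x ∂μ, 0 ≤ u x ∧ u x ≤ 1)
    (h : ∫ x, u x ∂μ = ∫ x, {y | ρ < v y}.indicator 1 x ∂μ) :
    ∫ x, u x * v x ∂μ - ∫ x, {y | ρ < v y}.indicator 1 x * v x ∂μ
      = ∫ x, (u x - {y | ρ < v y}.indicator 1 x) * (v x - ρ) ∂μ := by
  have hs := hv.aemeasurable.aestronglyMeasurable_indicator_one_setOf_lt (ρ := ρ)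
  have hs01 := Eventually.of_forall (f := ae μ) (indicator_one_mem_unitInterval {y | ρ < v y})
  exact integral_mul_sub_integral_mul_eq ρ
    (.of_bound hu 1 (hu01.mono fun _ hx => (Real.norm_of_nonneg hx.1).trans_le hx.2))
    (.of_bound hs 1 (hs01.mono fun _ hx => (Real.norm_of_nonneg hx.1).trans_le hx.2))
    (hv.mul_of_ae_mem_unitInterval hu hu01) (hv.mul_of_ae_mem_unitInterval hs hs01) h

theorem integral_mul_le_integral_indicator_mul (hv : Integrable v μ)
    (hu : AEStronglyMeasurable u μ) (hu01 : ∀ᵐ x ∂μ, 0 ≤ u x ∧ u x ≤ 1)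
    (h : ∫ x, u x ∂μ = ∫ x, {y | ρ < v y}.indicator 1 x ∂μ) :
    ∫ x, u x * v x ∂μ ≤ ∫ x, {y | ρ < v y}.indicator 1 x * v x ∂μ := by
  have hnonpos := integral_nonpos_of_ae
    (hu01.mono fun _ hx => sub_indicator_mul_sub_nonpos (ρ := ρ) (v := v) hx)
  linarith [integral_mul_sub_integral_indicator_mul_eq hv hu hu01 h]

theorem ae_eq_indicator_of_integral_mul_eq (hv : Integrable v μ)
    (hlevel : μ {x | v x = ρ} = 0) (hu : AEStronglyMeasurable u μ)
    (hu01 : ∀ᵐ x ∂μ, 0 ≤ u x ∧ u x ≤ 1)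
    (h : ∫ x, u x ∂μ = ∫ x, {y | ρ < v y}.indicator 1 x ∂μ)
    (heq : ∫ x, u x * v x ∂μ = ∫ x, {y | ρ < v y}.indicator 1 x * v x ∂μ) :
    u =ᵐ[μ] {y | ρ < v y}.indicator 1 := by
  set s : α → ℝ := {y | ρ < v y}.indicator 1
  have hs := hv.aemeasurable.aestronglyMeasurable_indicator_one_setOf_lt (ρ := ρ)
  have hint : Integrable (fun x => -((u x - s x) * (v x - ρ))) μ := by
    refine ((hv.sub (integrable_const ρ)).bdd_mul (c := 1) (hu.sub hs) ?_).neg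
    filter_upwards [hu01] with x hx
    have hsx := indicator_one_mem_unitInterval {y | ρ < v y} x
    exact abs_sub_le_of_nonneg_of_le hx.1 hx.2 hsx.1 hsx.2
  have hzero : ∫ x, -((u x - s x) * (v x - ρ)) ∂μ = 0 := by
    rw [integral_neg, ← integral_mul_sub_integral_indicator_mul_eq hv hu hu01 h, heq, sub_self,
      neg_zero]
  have hprod := (integral_eq_zero_iff_of_nonneg_ae
    (hu01.mono fun _ hx => neg_nonneg.2 (sub_indicator_mul_sub_nonpos (ρ := ρ) (v := v) hx))
    hint).1 hzero
  filter_upwards [hprod, measure_eq_zero_iff_ae_notMem.1 hlevel] with x hx hxρ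
  have hx' : (u x - s x) * (v x - ρ) = 0 := neg_eq_zero.1 hx
  exact sub_eq_zero.1 ((mul_eq_zero.1 hx').resolve_right (sub_ne_zero.2 hxρ))

end Bathtub

end MeasureTheory

theorem classical_bathtub_uniqueness_general
    (d : ℕ)
    (Ω : Set (Fin d → ℝ)) (hΩne : Ω.Nonempty) (hΩop : IsOpen Ω)
    (hΩbd : Bornology.IsBounded Ω)
    (L : ℝ) (hL : L ∈ Set.Ioo (0 : ℝ) 1)
    (μ : Measure (Fin d → ℝ)) (hμ : μ = volume.restrict Ω)
    (v : (Fin d → ℝ) → ℝ) (hv : MemLp v 2 μ)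
    (hlevel : ∀ l : ℝ, μ {x | v x = l} = 0)
    (Φ : ℝ → ℝ) (hΦ : ∀ r : ℝ, Φ r = (μ {x | v x > r}).toReal)
    (Φinv : ℝ → ℝ) (hΦinv : ∀ s : ℝ, Φinv s = sInf {r : ℝ | Φ r ≤ s})
    (A : ℝ) (hA : A = L * (volume Ω).toReal)
    (ρ : ℝ) (hρ : ρ = Φinv A)
    (ustar : (Fin d → ℝ) → ℝ)
    (hustar : ustar = Set.indicator {y | v y > ρ} (fun _ => (1:ℝ))) :
    (MemLp ustar 2 μ ∧ (∀ᵐ x ∂μ, 0 ≤ ustar x ∧ ustar x ≤ 1) ∧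
      (∫ x, ustar x ∂μ) = A) ∧
    (∀ u : (Fin d → ℝ) → ℝ, MemLp u 2 μ →
      (∀ᵐ x ∂μ, 0 ≤ u x ∧ u x ≤ 1) → (∫ x, u x ∂μ) = A →
      (∫ x, u x * v x ∂μ) ≤ ∫ x, ustar x * v x ∂μ) ∧
    (∀ u : (Fin d → ℝ) → ℝ, MemLp u 2 μ →
      (∀ᵐ x ∂μ, 0 ≤ u x ∧ u x ≤ 1) → (∫ x, u x ∂μ) = A →
      (∫ x, u x * v x ∂μ) = (∫ x, ustar x * v x ∂μ) →
      u =ᵐ[μ] ustar) ∧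
    (∫ x, ustar x * v x ∂μ) = ∫ x in {y | v y > ρ}, v x ∂μ := by
  obtain ⟨hL0, hL1⟩ := hL
  have hΩfin : volume Ω ≠ ∞ := hΩbd.measure_lt_top.ne
  have hΩpos : 0 < (volume Ω).toReal :=
    ENNReal.toReal_pos (hΩop.measure_pos volume hΩne).ne' hΩfin
  have : IsFiniteMeasure μ := hμ ▸ isFiniteMeasure_restrict.2 hΩfin
  have hA0 : 0 < A := hA ▸ mul_pos hL0 hΩpos
  have hAlt : ENNReal.ofReal A < μ univ := by
    rw [hμ, Measure.restrict_apply_univ, ← ENNReal.ofReal_toReal hΩfin,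
      ENNReal.ofReal_lt_ofReal_iff hΩpos, hA]
    nlinarith
  have hvint : Integrable v μ := hv.integrable one_le_two
  have hρq : ρ = superlevelQuantile μ v (ENNReal.ofReal A) := by
    simp only [hρ, hΦinv, superlevelQuantile, hΦ,
      ← ENNReal.le_ofReal_iff_toReal_le (measure_ne_top μ _) hA0.le, gt_iff_lt]
  have hS : μ {x | ρ < v x} = ENNReal.ofReal A := hρq ▸
    measure_superlevelQuantile_lt hvint.aemeasurable hlevel (ENNReal.ofReal_pos.2 hA0) hAlt
  have hSnull : NullMeasurableSet {x | ρ < v x} μ :=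
    nullMeasurableSet_lt aemeasurable_const hvint.aemeasurable
  have hustar_int : ∫ x, ustar x ∂μ = A := by
    rw [hustar]
    exact (integral_indicator_one₀ hSnull).trans
      (by rw [measureReal_def, hS, ENNReal.toReal_ofReal hA0.le])
  subst hustar
  refine ⟨⟨.of_bound (hvint.aemeasurable.aestronglyMeasurable_indicator_one_setOf_lt) 1
        (.of_forall fun _ => (norm_indicator_le_norm_self _ _).trans_eq norm_one),
      .of_forall (indicator_one_mem_unitInterval _), hustar_int⟩,
    fun u hu hu01 huA => integral_mul_le_integral_indicator_mul hvint hu.1 hu01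
      (huA.trans hustar_int.symm),
    fun u hu hu01 huA heq => ae_eq_indicator_of_integral_mul_eq hvint (hlevel ρ) hu.1 hu01
      (huA.trans hustar_int.symm) heq,
    integral_indicator_one_mul hSnull⟩

/-- Classical bathtub principle (uniqueness): if all level sets of `v` are
Lebesgue-null, then `χ_{v>ρ(v)}` is the unique (up to a.e. equality) maximiser of
`u ↦ ∫ u v` over `Ũ*_L`, and the maximum value equals `∫_{v>ρ(v)} v`. -/
theorem classical_bathtub_uniqueness
    (d : ℕ) (hd : 1 ≤ d)
    (Ω : Set (Fin d → ℝ)) (hΩne : Ω.Nonempty) (hΩop : IsOpen Ω)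
    (hΩbd : Bornology.IsBounded Ω)
    (L : ℝ) (hL : L ∈ Set.Ioo (0 : ℝ) 1)
    (μ : Measure (Fin d → ℝ)) (hμ : μ = volume.restrict Ω)
    (v : (Fin d → ℝ) → ℝ) (hv : MemLp v 2 μ)
    (hlevel : ∀ l : ℝ, μ {x | v x = l} = 0)
    (Φ : ℝ → ℝ) (hΦ : ∀ r : ℝ, Φ r = (μ {x | v x > r}).toReal)
    (Φinv : ℝ → ℝ) (hΦinv : ∀ s : ℝ, Φinv s = sInf {r : ℝ | Φ r ≤ s})
    (A : ℝ) (hA : A = L * (volume Ω).toReal)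
    (ρ : ℝ) (hρ : ρ = Φinv A)
    (ustar : (Fin d → ℝ) → ℝ)
    (hustar : ustar = Set.indicator {y | v y > ρ} (fun _ => (1:ℝ))) :
    (MemLp ustar 2 μ ∧ (∀ᵐ x ∂μ, 0 ≤ ustar x ∧ ustar x ≤ 1) ∧
      (∫ x, ustar x ∂μ) = A) ∧
    (∀ u : (Fin d → ℝ) → ℝ, MemLp u 2 μ →
      (∀ᵐ x ∂μ, 0 ≤ u x ∧ u x ≤ 1) → (∫ x, u x ∂μ) = A →
      (∫ x, u x * v x ∂μ) ≤ ∫ x, ustar x * v x ∂μ) ∧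
    (∀ u : (Fin d → ℝ) → ℝ, MemLp u 2 μ →
      (∀ᵐ x ∂μ, 0 ≤ u x ∧ u x ≤ 1) → (∫ x, u x ∂μ) = A →
      (∫ x, u x * v x ∂μ) = (∫ x, ustar x * v x ∂μ) →
      u =ᵐ[μ] ustar) ∧
    (∫ x, ustar x * v x ∂μ) = ∫ x in {y | v y > ρ}, v x ∂μ :=
  classical_bathtub_uniqueness_general d Ω hΩne hΩop hΩbd L hL μ hμ v hv hlevel Φ hΦ Φinv hΦinv A hA
    ρ hρ ustar hustar
end

section
/- Relaxed bathtub principle (maximisers): For every v ∈ L²(Ω), a function u* ∈ Ū_L maximises u ↦ ∫_Ω u·v over Ū_L if and only if u* = χ_{{v > h(v)}} + c·χ_{{v = h(v)}} almost everywhere, for some measurable c : Ω → ℝ with 0 ≤ c ≤ 1 satisfying: ∫_{{v = h(v)}} c = L|Ω| − |{v > h(v)}| in the case h(v) > 0, and ∫_{{v = h(v)}} c ≤ L|Ω| − |{v > h(v)}| in the case h(v) = 0. -/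
open MeasureTheory
open scoped ENNReal

/-!
If `w` takes values in `[0, 1]`, equals `1` on `{v > τ}` and `0` on `{v < τ}`, then
`(w - u) (v - τ) ≥ 0` pointwise for every `u` with values in `[0, 1]`, so
`∫ u v ≤ ∫ w v - τ (∫ w - ∫ u)`. The level `τ = h(v)` satisfies `|{v > τ}| ≤ A`, and
`A ≤ |{v ≥ τ}|` when `τ > 0`; so such a `w` with the full mass `A` (any mass when `τ = 0`)
makes the correction term nonnegative and is a maximiser. Conversely, comparing a maximiser with
the bathtub function of constant height on `{v = τ}` and mass `A` forces `(w - u) (v - τ) = 0`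
almost everywhere, so the maximiser is itself of bathtub form, with full mass when `τ > 0`.
-/

open Filter Set

section Profile

variable {X : Type*} [MeasurableSpace X] {μ : Measure X} {v u w : X → ℝ} {τ : ℝ}

def IsBathtubProfile (μ : Measure X) (v : X → ℝ) (τ : ℝ) (w : X → ℝ) : Prop :=
  ∀ᵐ x ∂μ, (τ < v x → w x = 1) ∧ (v x < τ → w x = 0)

lemma IsBathtubProfile.congr (hw : IsBathtubProfile μ v τ w) (hwu : w =ᵐ[μ] u) :
    IsBathtubProfile μ v τ u := by
  filter_upwards [hw, hwu] with x hx hwux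
  rwa [← hwux]

lemma sub_mul_sub_nonneg_of_profile {a b t τ : ℝ} (ha₁ : τ < t → a = 1) (ha₀ : t < τ → a = 0)
    (hb : 0 ≤ b ∧ b ≤ 1) : 0 ≤ (a - b) * (t - τ) := by
  rcases lt_trichotomy t τ with ht | rfl | ht
  · rw [ha₀ ht]; nlinarith
  · simp
  · rw [ha₁ ht]; nlinarith

lemma profile_of_sub_mul_sub_eq_zero {a b t τ : ℝ} (ha₁ : τ < t → a = 1) (ha₀ : t < τ → a = 0)
    (hab : (a - b) * (t - τ) = 0) : (τ < t → b = 1) ∧ (t < τ → b = 0) := by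
  refine ⟨fun ht => ?_, fun ht => ?_⟩
  · rw [ha₁ ht] at hab
    linarith [(mul_eq_zero.1 hab).resolve_right (sub_ne_zero.2 ht.ne')]
  · rw [ha₀ ht] at hab
    linarith [(mul_eq_zero.1 hab).resolve_right (sub_ne_zero.2 ht.ne)]

lemma ae_norm_le_one (hu : ∀ᵐ x ∂μ, 0 ≤ u x ∧ u x ≤ 1) : ∀ᵐ x ∂μ, ‖u x‖ ≤ 1 := by
  filter_upwards [hu] with x hx
  rw [Real.norm_eq_abs, abs_le]
  constructor <;> linarith [hx.1, hx.2]

variable [IsFiniteMeasure μ]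

lemma integral_sub_mul_sub (hv : Integrable v μ)
    (hwm : AEStronglyMeasurable w μ) (hw : ∀ᵐ x ∂μ, 0 ≤ w x ∧ w x ≤ 1)
    (hum : AEStronglyMeasurable u μ) (hu : ∀ᵐ x ∂μ, 0 ≤ u x ∧ u x ≤ 1) (τ : ℝ) :
    ∫ x, (w x - u x) * (v x - τ) ∂μ =
      (∫ x, w x * v x ∂μ - ∫ x, u x * v x ∂μ) - τ * (∫ x, w x ∂μ - ∫ x, u x ∂μ) := by
  have hwi := Integrable.of_bound hwm 1 (ae_norm_le_one hw)
  have hui := Integrable.of_bound hum 1 (ae_norm_le_one hu)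
  have hwv := hv.bdd_mul hwm (ae_norm_le_one hw)
  have huv := hv.bdd_mul hum (ae_norm_le_one hu)
  have hexpand : ∀ x, (w x - u x) * (v x - τ) = (w x * v x - u x * v x) - τ * (w x - u x) :=
    fun x => by ring
  have hsub₁ : Integrable (fun x => w x * v x - u x * v x) μ := hwv.sub huv
  have hsub₂ : Integrable (fun x => τ * (w x - u x)) μ := (hwi.sub hui).const_mul τ
  simp_rw [hexpand]
  rw [integral_sub hsub₁ hsub₂, integral_sub hwv huv, integral_const_mul, integral_sub hwi hui]

lemma integral_mul_le_of_isBathtubProfile (hv : Integrable v μ)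
    (hwm : AEStronglyMeasurable w μ) (hw : ∀ᵐ x ∂μ, 0 ≤ w x ∧ w x ≤ 1)
    (hwp : IsBathtubProfile μ v τ w)
    (hum : AEStronglyMeasurable u μ) (hu : ∀ᵐ x ∂μ, 0 ≤ u x ∧ u x ≤ 1) :
    ∫ x, u x * v x ∂μ ≤ ∫ x, w x * v x ∂μ - τ * (∫ x, w x ∂μ - ∫ x, u x ∂μ) := by
  have hnonneg : 0 ≤ ∫ x, (w x - u x) * (v x - τ) ∂μ := by
    refine integral_nonneg_of_ae ?_
    filter_upwards [hwp, hu] with x hx hux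
    exact sub_mul_sub_nonneg_of_profile hx.1 hx.2 hux
  rw [integral_sub_mul_sub hv hwm hw hum hu] at hnonneg
  linarith

lemma isBathtubProfile_of_le_integral_mul (hv : Integrable v μ)
    (hwm : AEStronglyMeasurable w μ) (hw : ∀ᵐ x ∂μ, 0 ≤ w x ∧ w x ≤ 1)
    (hwp : IsBathtubProfile μ v τ w)
    (hum : AEStronglyMeasurable u μ) (hu : ∀ᵐ x ∂μ, 0 ≤ u x ∧ u x ≤ 1)
    (hle : ∫ x, w x * v x ∂μ - τ * (∫ x, w x ∂μ - ∫ x, u x ∂μ) ≤ ∫ x, u x * v x ∂μ) :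
    IsBathtubProfile μ v τ u := by
  have hnonneg : 0 ≤ᵐ[μ] fun x => (w x - u x) * (v x - τ) := by
    filter_upwards [hwp, hu] with x hx hux
    exact sub_mul_sub_nonneg_of_profile hx.1 hx.2 hux
  have hint : Integrable (fun x => (w x - u x) * (v x - τ)) μ := by
    refine (hv.sub (integrable_const τ)).bdd_mul (c := 1) (hwm.sub hum) ?_
    filter_upwards [hw, hu] with x hwx hux
    rw [Real.norm_eq_abs, abs_le]
    constructor <;> linarith [hwx.1, hwx.2, hux.1, hux.2]
  have hzero : ∫ x, (w x - u x) * (v x - τ) ∂μ = 0 := by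
    refine le_antisymm ?_ (integral_nonneg_of_ae hnonneg)
    rw [integral_sub_mul_sub hv hwm hw hum hu]
    linarith
  filter_upwards [hwp, (integral_eq_zero_iff_of_nonneg_ae hnonneg hint).1 hzero] with x hx hx0
  exact profile_of_sub_mul_sub_eq_zero hx.1 hx.2 hx0

end Profile

section BathtubFun

variable {X : Type*} {v w c : X → ℝ} {τ : ℝ} {x : X}

noncomputable def bathtubFun (v : X → ℝ) (τ : ℝ) (c : X → ℝ) (x : X) : ℝ :=
  {y | τ < v y}.indicator (fun _ => 1) x + c x * {y | v y = τ}.indicator (fun _ => 1) x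

lemma bathtubFun_of_level_lt (hx : τ < v x) : bathtubFun v τ c x = 1 := by
  simp [bathtubFun, hx, hx.ne']

lemma bathtubFun_of_lt_level (hx : v x < τ) : bathtubFun v τ c x = 0 := by
  simp [bathtubFun, hx.not_gt, hx.ne]

lemma bathtubFun_of_eq_level (hx : v x = τ) : bathtubFun v τ c x = c x := by
  simp [bathtubFun, hx]

lemma bathtubFun_mem_Icc (hc : ∀ x, 0 ≤ c x ∧ c x ≤ 1) (x : X) :
    0 ≤ bathtubFun v τ c x ∧ bathtubFun v τ c x ≤ 1 := by
  rcases lt_trichotomy (v x) τ with hx | hx | hx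
  · simp [bathtubFun_of_lt_level hx]
  · rw [bathtubFun_of_eq_level hx]; exact hc x
  · simp [bathtubFun_of_level_lt hx]

variable [MeasurableSpace X] {μ : Measure X}

lemma isBathtubProfile_bathtubFun : IsBathtubProfile μ v τ (bathtubFun v τ c) :=
  ae_of_all _ fun _ => ⟨bathtubFun_of_level_lt, bathtubFun_of_lt_level⟩

lemma aestronglyMeasurable_bathtubFun (hv : AEMeasurable v μ) (hc : AEStronglyMeasurable c μ) :
    AEStronglyMeasurable (bathtubFun v τ c) μ :=
  (aestronglyMeasurable_const.indicator₀ (nullMeasurableSet_lt aemeasurable_const hv)).add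
    (hc.mul (aestronglyMeasurable_const.indicator₀
      (hv.nullMeasurableSet_preimage (measurableSet_singleton τ))))

lemma integral_bathtubFun [IsFiniteMeasure μ] (hv : AEMeasurable v μ)
    (hcm : AEStronglyMeasurable c μ) (hc : ∀ x, 0 ≤ c x ∧ c x ≤ 1) :
    ∫ x, bathtubFun v τ c x ∂μ = μ.real {x | τ < v x} + ∫ x in {x | v x = τ}, c x ∂μ := by
  have hgt : NullMeasurableSet {x | τ < v x} μ := nullMeasurableSet_lt aemeasurable_const hv
  have heq : NullMeasurableSet {x | v x = τ} μ :=
    hv.nullMeasurableSet_preimage (measurableSet_singleton τ)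
  have hci : Integrable c μ := Integrable.of_bound hcm 1 (ae_norm_le_one (ae_of_all _ hc))
  simp only [bathtubFun, ← Set.indicator_mul_right, mul_one]
  rw [integral_add ((integrable_const 1).indicator₀ hgt) (hci.indicator₀ heq),
    integral_indicator₀ hgt, integral_indicator₀ heq, setIntegral_const, smul_eq_mul, mul_one]

lemma IsBathtubProfile.exists_ae_eq_bathtubFun (hwp : IsBathtubProfile μ v τ w)
    (hwm : AEStronglyMeasurable w μ) (hw : ∀ᵐ x ∂μ, 0 ≤ w x ∧ w x ≤ 1) :
    ∃ c, Measurable c ∧ (∀ x, 0 ≤ c x ∧ c x ≤ 1) ∧ w =ᵐ[μ] bathtubFun v τ c := by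
  refine ⟨fun x => max 0 (min 1 (hwm.mk w x)),
    measurable_const.max (measurable_const.min hwm.stronglyMeasurable_mk.measurable),
    fun x => ⟨le_max_left _ _, max_le zero_le_one (min_le_left _ _)⟩, ?_⟩
  filter_upwards [hwp, hw, hwm.ae_eq_mk] with x hx hwx hmk
  rcases lt_trichotomy (v x) τ with hlt | heq | hgt
  · rw [bathtubFun_of_lt_level hlt, hx.2 hlt]
  · rw [bathtubFun_of_eq_level heq, ← hmk, min_eq_right hwx.2, max_eq_right hwx.1]
  · rw [bathtubFun_of_level_lt hgt, hx.1 hgt]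

end BathtubFun

section Level

variable {X : Type*} [MeasurableSpace X] {μ : Measure X} {v : X → ℝ} {τ A : ℝ}

lemma measure_lt_le_of_forall_gt {a : ℝ≥0∞} (H : ∀ r, τ < r → μ {x | r < v x} ≤ a) :
    μ {x | τ < v x} ≤ a := by
  obtain ⟨r, hr_anti, hr_gt, hr_lim⟩ := exists_seq_strictAnti_tendsto τ
  have hunion : {x | τ < v x} = ⋃ n, {x | r n < v x} := by
    ext x
    simp only [mem_iUnion]
    exact ⟨fun hx => (hr_lim.eventually (gt_mem_nhds hx)).exists,
      fun ⟨n, hn⟩ => (hr_gt n).trans hn⟩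
  have hmono : Monotone fun n => {x | r n < v x} :=
    fun m n hmn x hx => (hr_anti.antitone hmn).trans_lt hx
  rw [hunion, hmono.measure_iUnion]
  exact iSup_le fun n => H _ (hr_gt n)

noncomputable def bathtubLevel (μ : Measure X) (v : X → ℝ) (A : ℝ) : ℝ :=
  max 0 (sInf {r | μ.real {x | r < v x} ≤ A})

variable [IsFiniteMeasure μ]

lemma le_measure_le_of_forall_lt (hv : AEMeasurable v μ) {a : ℝ≥0∞}
    (H : ∀ r < τ, a ≤ μ {x | r < v x}) : a ≤ μ {x | τ ≤ v x} := by
  obtain ⟨r, hr_mono, hr_lt, hr_lim⟩ := exists_seq_strictMono_tendsto τ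
  have hinter : {x | τ ≤ v x} = ⋂ n, {x | r n < v x} := by
    ext x
    simp only [mem_iInter]
    exact ⟨fun hx n => (hr_lt n).trans_le hx, fun hx => le_of_tendsto' hr_lim fun n => (hx n).le⟩
  have hanti : Antitone fun n => {x | r n < v x} :=
    fun m n hmn x hx => (hr_mono.monotone hmn).trans_lt hx
  rw [hinter, hanti.measure_iInter (fun n => nullMeasurableSet_lt aemeasurable_const hv)
    ⟨0, measure_ne_top _ _⟩]
  exact le_iInf fun n => H _ (hr_lt n)

lemma measureReal_setOf_le_eq_add (hv : AEMeasurable v μ) :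
    μ.real {x | τ ≤ v x} = μ.real {x | τ < v x} + μ.real {x | v x = τ} := by
  have hunion : {x | τ ≤ v x} = {x | τ < v x} ∪ {x | v x = τ} := by
    ext x
    simp [le_iff_lt_or_eq, eq_comm]
  have heq : NullMeasurableSet {x | v x = τ} μ :=
    hv.nullMeasurableSet_preimage (measurableSet_singleton τ)
  rw [hunion, measureReal_union₀ heq]
  exact Disjoint.aedisjoint (disjoint_left.2 fun x hlt hx => hlt.ne' hx)

lemma nonempty_setOf_measureReal_lt_le (hv : AEMeasurable v μ) (hA : 0 < A) :
    {r | μ.real {x | r < v x} ≤ A}.Nonempty := by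
  have hempty : ⋂ n : ℕ, {x | (n : ℝ) < v x} = ∅ := by
    ext x
    simp only [mem_iInter, mem_empty_iff_false, iff_false, not_forall]
    exact (exists_nat_ge (v x)).imp fun n hn => hn.not_gt
  have hinf := Antitone.measure_iInter (μ := μ) (s := fun n : ℕ => {x | (n : ℝ) < v x})
    (fun m n hmn x hx => (Nat.cast_le (α := ℝ) |>.2 hmn).trans_lt hx)
    (fun n => nullMeasurableSet_lt aemeasurable_const hv) ⟨0, measure_ne_top _ _⟩
  rw [hempty, measure_empty] at hinf
  obtain ⟨n, hn⟩ := iInf_lt_iff.1 (hinf ▸ ENNReal.ofReal_pos.2 hA)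
  exact ⟨n, ENNReal.toReal_le_of_le_ofReal hA.le hn.le⟩

lemma measureReal_bathtubLevel_lt_le (hv : AEMeasurable v μ) (hA : 0 < A) :
    μ.real {x | bathtubLevel μ v A < v x} ≤ A := by
  refine ENNReal.toReal_le_of_le_ofReal hA.le (measure_lt_le_of_forall_gt fun r hr => ?_)
  obtain ⟨s, hs, hsr⟩ := exists_lt_of_csInf_lt (nonempty_setOf_measureReal_lt_le hv hA)
    ((le_max_right _ _).trans_lt hr)
  calc μ {x | r < v x} ≤ μ {x | s < v x} := measure_mono fun x hx => hsr.trans hx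
    _ ≤ ENNReal.ofReal A := (ENNReal.le_ofReal_iff_toReal_le (measure_ne_top _ _) hA.le).2 hs

lemma le_measureReal_bathtubLevel_le (hv : AEMeasurable v μ) (hpos : 0 < bathtubLevel μ v A) :
    A ≤ μ.real {x | bathtubLevel μ v A ≤ v x} := by
  set S := {r | μ.real {x | r < v x} ≤ A}
  have hS : 0 < sInf S := (lt_max_iff.1 hpos).resolve_left (lt_irrefl 0)
  -- Otherwise `sInf S` would be the junk value `0`.
  have hbdd : BddBelow S := by
    by_contra hS'
    rw [Real.sInf_of_not_bddBelow hS'] at hS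
    exact lt_irrefl 0 hS
  rw [bathtubLevel, max_eq_right hS.le]
  refine (ENNReal.ofReal_le_iff_le_toReal (measure_ne_top _ _)).1
    (le_measure_le_of_forall_lt hv fun r hr => ENNReal.ofReal_le_of_le_toReal ?_)
  exact (not_le.1 fun hrS : r ∈ S => (csInf_le hbdd hrS).not_gt hr).le

end Level

section Maximisers

variable {X : Type*} [MeasurableSpace X] {μ : Measure X} [IsFiniteMeasure μ] {v w c : X → ℝ}
  {τ A : ℝ}

lemma exists_mem_Icc_add_mul_eq {M E A : ℝ} (hE : 0 ≤ E) (hMA : M ≤ A) (hAME : A ≤ M + E) :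
    ∃ t : ℝ, (0 ≤ t ∧ t ≤ 1) ∧ M + t * E = A := by
  rcases hE.eq_or_lt with rfl | hE
  · exact ⟨0, ⟨le_rfl, zero_le_one⟩, by linarith⟩
  · refine ⟨(A - M) / E, ⟨div_nonneg (by linarith) hE.le, (div_le_one hE).2 (by linarith)⟩, ?_⟩
    field_simp
    ring

lemma exists_integral_bathtubFun_const (hv : AEMeasurable v μ) (hτ : 0 ≤ τ)
    (hgt : μ.real {x | τ < v x} ≤ A) (hge : 0 < τ → A ≤ μ.real {x | τ ≤ v x}) :
    ∃ t : ℝ, (0 ≤ t ∧ t ≤ 1) ∧ ∫ x, bathtubFun v τ (fun _ => t) x ∂μ ≤ A ∧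
      (0 < τ → ∫ x, bathtubFun v τ (fun _ => t) x ∂μ = A) := by
  have hint : ∀ t : ℝ, 0 ≤ t ∧ t ≤ 1 → ∫ x, bathtubFun v τ (fun _ => t) x ∂μ =
      μ.real {x | τ < v x} + t * μ.real {x | v x = τ} := fun t ht => by
    rw [integral_bathtubFun hv aestronglyMeasurable_const fun _ => ht, setIntegral_const,
      smul_eq_mul, mul_comm]
  rcases hτ.eq_or_lt with rfl | hτ
  · refine ⟨0, ⟨le_rfl, zero_le_one⟩, ?_, fun h => (lt_irrefl 0 h).elim⟩
    rwa [hint 0 ⟨le_rfl, zero_le_one⟩, zero_mul, add_zero]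
  · obtain ⟨t, ht, hteq⟩ := exists_mem_Icc_add_mul_eq measureReal_nonneg hgt
      (measureReal_setOf_le_eq_add hv ▸ hge hτ)
    refine ⟨t, ht, ?_, fun _ => ?_⟩ <;> rw [hint t ht, hteq]

lemma integral_mul_le_of_ae_eq_bathtubFun (hv : Integrable v μ) (hτ : 0 ≤ τ)
    (hcm : Measurable c) (hc : ∀ x, 0 ≤ c x ∧ c x ≤ 1)
    (hmass : 0 < τ → ∫ x in {y | v y = τ}, c x ∂μ = A - μ.real {y | τ < v y})
    (hwc : w =ᵐ[μ] bathtubFun v τ c) {u : X → ℝ} (hum : AEStronglyMeasurable u μ)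
    (hu : ∀ᵐ x ∂μ, 0 ≤ u x ∧ u x ≤ 1) (huA : ∫ x, u x ∂μ ≤ A) :
    ∫ x, u x * v x ∂μ ≤ ∫ x, w x * v x ∂μ := by
  have hwm : AEStronglyMeasurable w μ :=
    (aestronglyMeasurable_bathtubFun hv.aemeasurable hcm.aestronglyMeasurable).congr hwc.symm
  have hw : ∀ᵐ x ∂μ, 0 ≤ w x ∧ w x ≤ 1 := by
    filter_upwards [hwc] with x hx
    rw [hx]
    exact bathtubFun_mem_Icc hc x
  have hvar := integral_mul_le_of_isBathtubProfile hv hwm hw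
    (isBathtubProfile_bathtubFun.congr hwc.symm) hum hu
  have hgap : 0 ≤ τ * (∫ x, w x ∂μ - ∫ x, u x ∂μ) := by
    rcases hτ.eq_or_lt with rfl | hτ
    · simp
    have hw_int : ∫ x, w x ∂μ = μ.real {y | τ < v y} + ∫ x in {y | v y = τ}, c x ∂μ :=
      (integral_congr_ae hwc).trans
        (integral_bathtubFun hv.aemeasurable hcm.aestronglyMeasurable hc)
    exact mul_nonneg hτ.le (by linarith [hmass hτ])
  linarith

lemma exists_ae_eq_bathtubFun_of_forall_integral_mul_le (hv : Integrable v μ) (hτ : 0 ≤ τ)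
    (hgt : μ.real {x | τ < v x} ≤ A) (hge : 0 < τ → A ≤ μ.real {x | τ ≤ v x})
    (hwm : AEStronglyMeasurable w μ) (hw : ∀ᵐ x ∂μ, 0 ≤ w x ∧ w x ≤ 1) (hwA : ∫ x, w x ∂μ ≤ A)
    (hmax : ∀ u : X → ℝ, AEStronglyMeasurable u μ → (∀ᵐ x ∂μ, 0 ≤ u x ∧ u x ≤ 1) →
      ∫ x, u x ∂μ ≤ A → ∫ x, u x * v x ∂μ ≤ ∫ x, w x * v x ∂μ) :
    ∃ c : X → ℝ, Measurable c ∧ (∀ x, 0 ≤ c x ∧ c x ≤ 1) ∧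
      (0 < τ → ∫ x in {y | v y = τ}, c x ∂μ = A - μ.real {y | τ < v y}) ∧
      (τ = 0 → ∫ x in {y | v y = τ}, c x ∂μ ≤ A - μ.real {y | τ < v y}) ∧
      w =ᵐ[μ] bathtubFun v τ c := by
  obtain ⟨t, ht, htA, htA'⟩ := exists_integral_bathtubFun_const hv.aemeasurable hτ hgt hge
  set u₀ := bathtubFun v τ fun _ => t
  have hu₀m : AEStronglyMeasurable u₀ μ :=
    aestronglyMeasurable_bathtubFun hv.aemeasurable aestronglyMeasurable_const
  have hu₀ : ∀ᵐ x ∂μ, 0 ≤ u₀ x ∧ u₀ x ≤ 1 := ae_of_all _ (bathtubFun_mem_Icc fun _ => ht)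
  have hle : ∫ x, u₀ x * v x ∂μ ≤ ∫ x, w x * v x ∂μ := hmax u₀ hu₀m hu₀ htA
  have hvar := integral_mul_le_of_isBathtubProfile hv hu₀m hu₀ isBathtubProfile_bathtubFun hwm hw
  have hgap : τ * (∫ x, u₀ x ∂μ - ∫ x, w x ∂μ) = 0 := by
    refine le_antisymm (by linarith) ?_
    rcases hτ.eq_or_lt with rfl | hτ
    · simp
    · exact mul_nonneg hτ.le (by linarith [htA' hτ])
  have hwp : IsBathtubProfile μ v τ w := isBathtubProfile_of_le_integral_mul hv hu₀m hu₀
    isBathtubProfile_bathtubFun hwm hw (by linarith)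
  obtain ⟨c, hcm, hc, hwc⟩ := hwp.exists_ae_eq_bathtubFun hwm hw
  have hw_int : ∫ x, w x ∂μ = μ.real {y | τ < v y} + ∫ x in {y | v y = τ}, c x ∂μ :=
    (integral_congr_ae hwc).trans (integral_bathtubFun hv.aemeasurable hcm.aestronglyMeasurable hc)
  refine ⟨c, hcm, hc, fun hτ => ?_, fun _ => by linarith, hwc⟩
  have hu₀w : ∫ x, u₀ x ∂μ = ∫ x, w x ∂μ :=
    sub_eq_zero.1 ((mul_eq_zero.1 hgap).resolve_left hτ.ne')
  linarith [htA' hτ]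

end Maximisers

theorem relaxed_bathtub_maximisers_general
    (d : ℕ)
    (Ω : Set (Fin d → ℝ)) (hΩne : Ω.Nonempty) (hΩop : IsOpen Ω)
    (hΩbd : Bornology.IsBounded Ω)
    (L : ℝ) (hL : L ∈ Set.Ioo (0 : ℝ) 1)
    (μ : Measure (Fin d → ℝ)) (hμ : μ = volume.restrict Ω)
    (v : (Fin d → ℝ) → ℝ) (hv : MemLp v 2 μ)
    (Φ : ℝ → ℝ) (hΦ : ∀ r : ℝ, Φ r = (μ {x | v x > r}).toReal)
    (Φinv : ℝ → ℝ) (hΦinv : ∀ s : ℝ, Φinv s = sInf {r : ℝ | Φ r ≤ s})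
    (A : ℝ) (hA : A = L * (volume Ω).toReal)
    (hvv : ℝ) (hhv : hvv = max 0 (Φinv A))
    (ustar : (Fin d → ℝ) → ℝ)
    (hustar : MemLp ustar 2 μ ∧ (∀ᵐ x ∂μ, 0 ≤ ustar x ∧ ustar x ≤ 1) ∧
      (∫ x, ustar x ∂μ) ≤ A) :
    (∀ u : (Fin d → ℝ) → ℝ, MemLp u 2 μ →
        (∀ᵐ x ∂μ, 0 ≤ u x ∧ u x ≤ 1) → (∫ x, u x ∂μ) ≤ A →
        (∫ x, u x * v x ∂μ) ≤ ∫ x, ustar x * v x ∂μ)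
    ↔
    (∃ c : (Fin d → ℝ) → ℝ, Measurable c ∧ (∀ x, 0 ≤ c x ∧ c x ≤ 1) ∧
      (0 < hvv →
        (∫ x in {y | v y = hvv}, c x ∂μ) = A - (μ {y | v y > hvv}).toReal) ∧
      (hvv = 0 →
        (∫ x in {y | v y = hvv}, c x ∂μ) ≤ A - (μ {y | v y > hvv}).toReal) ∧
      (∀ᵐ x ∂μ, ustar x =
        Set.indicator {y | v y > hvv} (fun _ => (1:ℝ)) x
          + c x * Set.indicator {y | v y = hvv} (fun _ => (1:ℝ)) x)) := by
  have : IsFiniteMeasure μ := hμ ▸ isFiniteMeasure_restrict.2 hΩbd.measure_lt_top.ne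
  have hv₁ : Integrable v μ := hv.integrable one_le_two
  have hA₀ : 0 < A := hA ▸ mul_pos hL.1
    (ENNReal.toReal_pos (hΩop.measure_ne_zero volume hΩne) hΩbd.measure_lt_top.ne)
  have hlevel : hvv = bathtubLevel μ v A := by
    simp only [hhv, hΦinv, hΦ]
    rfl
  have hτ : 0 ≤ hvv := hhv ▸ le_max_left _ _
  constructor
  · intro hmax
    refine exists_ae_eq_bathtubFun_of_forall_integral_mul_le hv₁ hτ ?_ ?_ hustar.1.1 hustar.2.1
      hustar.2.2 fun u hum hu huA => hmax u (MemLp.of_bound hum 1 (ae_norm_le_one hu)) hu huA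
    · exact hlevel ▸ measureReal_bathtubLevel_lt_le hv₁.aemeasurable hA₀
    · exact hlevel ▸ le_measureReal_bathtubLevel_le hv₁.aemeasurable
  · rintro ⟨c, hcm, hc, hmass, -, hwc⟩ u hu₂ hu huA
    exact integral_mul_le_of_ae_eq_bathtubFun hv₁ hτ hcm hc hmass hwc hu₂.1 hu huA

/-- Relaxed bathtub principle (maximisers): `ustar ∈ Ū_L` maximises `u ↦ ∫ u v`
over `Ū_L` iff `ustar = χ_{v>h(v)} + c χ_{v=h(v)}` a.e. for some measurable `c`
with `0 ≤ c ≤ 1`, where `∫_{v=h(v)} c = L|Ω| - |{v>h(v)}|` if `h(v) > 0` and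
`∫_{v=h(v)} c ≤ L|Ω| - |{v>h(v)}|` if `h(v) = 0`. -/
theorem relaxed_bathtub_maximisers
    (d : ℕ) (hd : 1 ≤ d)
    (Ω : Set (Fin d → ℝ)) (hΩne : Ω.Nonempty) (hΩop : IsOpen Ω)
    (hΩbd : Bornology.IsBounded Ω)
    (L : ℝ) (hL : L ∈ Set.Ioo (0 : ℝ) 1)
    (μ : Measure (Fin d → ℝ)) (hμ : μ = volume.restrict Ω)
    (v : (Fin d → ℝ) → ℝ) (hv : MemLp v 2 μ)
    (Φ : ℝ → ℝ) (hΦ : ∀ r : ℝ, Φ r = (μ {x | v x > r}).toReal)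
    (Φinv : ℝ → ℝ) (hΦinv : ∀ s : ℝ, Φinv s = sInf {r : ℝ | Φ r ≤ s})
    (A : ℝ) (hA : A = L * (volume Ω).toReal)
    (hvv : ℝ) (hhv : hvv = max 0 (Φinv A))
    (ustar : (Fin d → ℝ) → ℝ)
    (hustar : MemLp ustar 2 μ ∧ (∀ᵐ x ∂μ, 0 ≤ ustar x ∧ ustar x ≤ 1) ∧
      (∫ x, ustar x ∂μ) ≤ A) :
    (∀ u : (Fin d → ℝ) → ℝ, MemLp u 2 μ →
        (∀ᵐ x ∂μ, 0 ≤ u x ∧ u x ≤ 1) → (∫ x, u x ∂μ) ≤ A →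
        (∫ x, u x * v x ∂μ) ≤ ∫ x, ustar x * v x ∂μ)
    ↔
    (∃ c : (Fin d → ℝ) → ℝ, Measurable c ∧ (∀ x, 0 ≤ c x ∧ c x ≤ 1) ∧
      (0 < hvv →
        (∫ x in {y | v y = hvv}, c x ∂μ) = A - (μ {y | v y > hvv}).toReal) ∧
      (hvv = 0 →
        (∫ x in {y | v y = hvv}, c x ∂μ) ≤ A - (μ {y | v y > hvv}).toReal) ∧
      (∀ᵐ x ∂μ, ustar x =
        Set.indicator {y | v y > hvv} (fun _ => (1:ℝ)) x
          + c x * Set.indicator {y | v y = hvv} (fun _ => (1:ℝ)) x)) :=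
  relaxed_bathtub_maximisers_general d Ω hΩne hΩop hΩbd L hL μ hμ v hv Φ hΦ Φinv hΦinv A hA hvv hhv
    ustar hustar
end

section
/- Coercivity of the dual functional: Let z ∈ L²(Ω) with z ≥ 0 a.e. and ε > 0, and define J(q) := Φ(Bq) − ⟨z, q⟩_{L²(Ω)} + ε·‖q‖_{L²(Ω)} for q ∈ L²(Ω). Then liminf_{‖q‖_{L²(Ω)} → ∞} J(q)/‖q‖_{L²(Ω)} ≥ ε. In particular J(q) → +∞ as ‖q‖_{L²(Ω)} → ∞, and J attains its minimum on L²(Ω). -/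
/-!
Write `f = Φ ∘ B`. On the set `{v | ‖v‖ ≤ 1 ∧ δ ≤ ⟪z, v⟫}` the convex lower semicontinuous
function `f` attains its minimum `m`, and `m > 0`: a zero `v` of `f` has `v ≤ 0` a.e., hence
`⟪z, v⟫ ≤ 0 < δ`. By 2-homogeneity `f q ≥ m ‖q‖²` whenever `⟪z, q⟫ ≥ δ ‖q‖`, so for `‖q‖ ≥ ‖z‖ / m`
we get `⟪z, q⟫ - f q ≤ δ ‖q‖`, i.e. `J q ≥ (ε - δ) ‖q‖`. Hence `J` is coercive, and being convex and
lower semicontinuous it attains its minimum on a bounded sublevel set.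

Minimizers on bounded closed convex subsets of a Hilbert space exist because a decreasing sequence
of nonempty bounded closed convex sets has a common point.
-/

open MeasureTheory Filter Bornology Set Metric
open scoped RealInnerProductSpace Topology

section Hilbert

variable {H : Type*} [NormedAddCommGroup H] [InnerProductSpace ℝ H]

theorem norm_sub_sq_le_of_le_norm_midpoint {x y : H} {r : ℝ} (hr : 0 ≤ r)
    (h : r ≤ ‖midpoint ℝ x y‖) : ‖x - y‖ ^ 2 ≤ 2 * ‖x‖ ^ 2 + 2 * ‖y‖ ^ 2 - 4 * r ^ 2 := by
  have hpar := parallelogram_law_with_norm ℝ x y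
  have hmid : ‖x + y‖ = 2 * ‖midpoint ℝ x y‖ := by
    rw [midpoint_eq_smul_add, norm_smul]
    norm_num
    ring
  nlinarith

variable [CompleteSpace H]

/-- The minimal-norm points of the `C n` form a Cauchy sequence: their norms increase to a
limit `L`, and the parallelogram law bounds `‖p N - p n‖²` by `2 (L² - ‖p N‖²)`. -/
theorem nonempty_iInter_of_antitone_of_convex {C : ℕ → Set H} (hanti : Antitone C)
    (hne : ∀ n, (C n).Nonempty) (hcl : ∀ n, IsClosed (C n)) (hcv : ∀ n, Convex ℝ (C n))
    (hbd : IsBounded (C 0)) : (⋂ n, C n).Nonempty := by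
  have hproj n : ∃ p ∈ C n, ‖p‖ = ⨅ w : C n, ‖(w : H)‖ := by
    simpa using exists_norm_eq_iInf_of_complete_convex (hne n) (hcl n).isComplete (hcv n) 0
  choose p hpC hpmin using hproj
  have hp_le n w (hw : w ∈ C n) : ‖p n‖ ≤ ‖w‖ :=
    hpmin n ▸ ciInf_le ⟨0, by rintro _ ⟨w, rfl⟩; positivity⟩ (⟨w, hw⟩ : C n)
  have hmono : Monotone (‖p ·‖) := fun k n hkn => hp_le k _ (hanti hkn (hpC n))
  obtain ⟨D, hD⟩ := hbd.exists_norm_le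
  have hbdd : BddAbove (range (‖p ·‖)) :=
    ⟨D, by rintro _ ⟨n, rfl⟩; exact hD _ (hanti n.zero_le (hpC n))⟩
  obtain ⟨L, hL⟩ : ∃ L, Tendsto (‖p ·‖) atTop (𝓝 L) := ⟨_, tendsto_atTop_ciSup hmono hbdd⟩
  have hdist N n (hNn : N ≤ n) : dist (p N) (p n) ≤ √(2 * (L ^ 2 - ‖p N‖ ^ 2)) := by
    rw [dist_eq_norm]
    apply Real.le_sqrt_of_sq_le
    have hmid := norm_sub_sq_le_of_le_norm_midpoint (norm_nonneg _)
      (hp_le N _ ((hcv N).midpoint_mem (hpC N) (hanti hNn (hpC n))))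
    have hnL : ‖p n‖ ≤ L := hmono.ge_of_tendsto hL n
    nlinarith [norm_nonneg (p n)]
  have hlim : Tendsto (fun N => √(2 * (L ^ 2 - ‖p N‖ ^ 2))) atTop (𝓝 0) := by
    convert ((hL.pow 2).const_sub (L ^ 2) |>.const_mul 2).sqrt using 2
    simp
  obtain ⟨v, hv⟩ := cauchySeq_tendsto_of_complete (cauchySeq_of_le_tendsto_0' _ hdist hlim)
  exact ⟨v, mem_iInter.2 fun k => (hcl k).mem_of_tendsto hv <|
    (eventually_ge_atTop k).mono fun n hn => hanti hn (hpC n)⟩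

section ConvexOn

variable {S : Set H} {f : H → ℝ}

theorem ConvexOn.exists_forall_le_of_isBounded (hf : ConvexOn ℝ S f)
    (hlsc : LowerSemicontinuous f) (hS : IsClosed S) (hSb : IsBounded S) {a : ℕ → ℝ}
    (ha : Antitone a) (hne : ∀ n, ∃ x ∈ S, f x ≤ a n) : ∃ x ∈ S, ∀ n, f x ≤ a n := by
  obtain ⟨x, hx⟩ := nonempty_iInter_of_antitone_of_convex (C := fun n => {x ∈ S | f x ≤ a n})
    (fun _ _ hkn _ hx => ⟨hx.1, hx.2.trans (ha hkn)⟩) hne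
    (fun n => hS.inter (hlsc.isClosed_preimage (a n))) (fun n => hf.convex_le (a n))
    (hSb.subset fun _ hx => hx.1)
  rw [mem_iInter] at hx
  exact ⟨x, (hx 0).1, fun n => (hx n).2⟩

theorem ConvexOn.bddBelow_image_of_isBounded (hf : ConvexOn ℝ S f)
    (hlsc : LowerSemicontinuous f) (hS : IsClosed S) (hSb : IsBounded S) : BddBelow (f '' S) := by
  by_contra h
  have hne (n : ℕ) : ∃ x ∈ S, f x ≤ -n := by
    obtain ⟨_, ⟨x, hx, rfl⟩, hlt⟩ := not_bddBelow_iff.1 h (-n)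
    exact ⟨x, hx, hlt.le⟩
  obtain ⟨x, -, hx⟩ := hf.exists_forall_le_of_isBounded hlsc hS hSb
    (fun _ _ hkn => neg_le_neg (Nat.cast_le.2 hkn)) hne
  obtain ⟨n, hn⟩ := exists_nat_gt (-f x)
  linarith [hx n]

theorem ConvexOn.exists_isMinOn_of_isBounded (hf : ConvexOn ℝ S f)
    (hlsc : LowerSemicontinuous f) (hS : IsClosed S) (hSb : IsBounded S) (hSne : S.Nonempty) :
    ∃ x ∈ S, IsMinOn f S x := by
  set m := sInf (f '' S)
  have hbdd := hf.bddBelow_image_of_isBounded hlsc hS hSb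
  have hne (n : ℕ) : ∃ x ∈ S, f x ≤ m + 1 / (n + 1) := by
    obtain ⟨_, ⟨x, hx, rfl⟩, hlt⟩ :=
      exists_lt_of_csInf_lt (hSne.image f) (lt_add_of_pos_right m Nat.one_div_pos_of_nat)
    exact ⟨x, hx, hlt.le⟩
  obtain ⟨x, hxS, hx⟩ := hf.exists_forall_le_of_isBounded hlsc hS hSb
    (fun _ _ hkn => by gcongr) hne
  have hxm : f x ≤ m :=
    ge_of_tendsto' (by simpa using tendsto_one_div_add_atTop_nhds_zero_nat.const_add m) hx
  exact ⟨x, hxS, isMinOn_iff.2 fun y hy => hxm.trans (csInf_le hbdd ⟨y, hy, rfl⟩)⟩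

theorem ConvexOn.exists_forall_le_of_tendsto_cobounded (hf : ConvexOn ℝ univ f)
    (hlsc : LowerSemicontinuous f) (htend : Tendsto f (cobounded H) atTop) :
    ∃ x, ∀ y, f x ≤ f y := by
  set S := {y | f y ≤ f 0}
  have hSb : IsBounded S := by
    rw [isBounded_def]
    filter_upwards [htend.eventually_gt_atTop (f 0)] with y hy using not_le.2 hy
  have hSconv : Convex ℝ S := by simpa using hf.convex_le (f 0)
  obtain ⟨x, -, hx⟩ := (hf.subset (subset_univ S) hSconv).exists_isMinOn_of_isBounded hlsc
    (hlsc.isClosed_preimage (f 0)) hSb ⟨0, le_refl (f 0)⟩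
  have hx0 : f x ≤ f 0 := isMinOn_iff.1 hx 0 (le_refl (f 0))
  refine ⟨x, fun y => ?_⟩
  by_cases hy : f y ≤ f 0
  · exact isMinOn_iff.1 hx y hy
  · exact hx0.trans (not_le.1 hy).le

end ConvexOn

end Hilbert

theorem MeasureTheory.L2.inner_nonpos_of_ae_nonneg_of_ae_nonpos {α : Type*} [MeasurableSpace α]
    {μ : Measure α} {f g : Lp ℝ 2 μ} (hf : ∀ᵐ x ∂μ, 0 ≤ f x) (hg : ∀ᵐ x ∂μ, g x ≤ 0) :
    ⟪f, g⟫ ≤ 0 := by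
  rw [L2.inner_def]
  refine integral_nonpos_of_ae ?_
  filter_upwards [hf, hg] with x hfx hgx
  simpa using mul_nonpos_of_nonpos_of_nonneg hgx hfx

section DualFunctional

variable {H : Type*} [NormedAddCommGroup H] [InnerProductSpace ℝ H] {f : H → ℝ} {z : H}

def dualFunctional (f : H → ℝ) (z : H) (ε : ℝ) (q : H) : ℝ := f q - ⟪z, q⟫ + ε * ‖q‖

theorem convexOn_dualFunctional (hconv : ConvexOn ℝ univ f) (z : H) {ε : ℝ} (hε : 0 ≤ ε) :
    ConvexOn ℝ univ (dualFunctional f z ε) := by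
  have h := (hconv.sub ((innerSL ℝ z).toLinearMap.concaveOn convex_univ)).add
    ((convexOn_norm convex_univ).smul hε)
  have heq : f - ⇑(innerSL ℝ z).toLinearMap + (fun q => ε • ‖q‖) = dualFunctional f z ε := by
    ext q
    simp [dualFunctional]
  rwa [heq] at h

theorem lowerSemicontinuous_dualFunctional (hlsc : LowerSemicontinuous f) (z : H) (ε : ℝ) :
    LowerSemicontinuous (dualFunctional f z ε) := by
  have hcont : Continuous fun q => -⟪z, q⟫ + ε * ‖q‖ :=
    (continuous_const.inner continuous_id).neg.add (continuous_const.mul continuous_norm)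
  have heq : dualFunctional f z ε = fun q => f q + (-⟪z, q⟫ + ε * ‖q‖) := by
    ext q
    rw [dualFunctional]
    ring
  rw [heq]
  exact hlsc.add hcont.lowerSemicontinuous

variable [CompleteSpace H]

theorem exists_pos_mul_norm_sq_le (hconv : ConvexOn ℝ univ f) (hlsc : LowerSemicontinuous f)
    (hnonneg : ∀ x, 0 ≤ f x) (hhom : ∀ l : ℝ, 0 < l → ∀ x, f (l • x) = l ^ 2 * f x)
    (hsign : ∀ x, f x = 0 → ⟪z, x⟫ ≤ 0) {δ : ℝ} (hδ : 0 < δ) :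
    ∃ m > 0, ∀ q, δ * ‖q‖ ≤ ⟪z, q⟫ → m * ‖q‖ ^ 2 ≤ f q := by
  set S := closedBall (0 : H) 1 ∩ {v | δ ≤ ⟪z, v⟫}
  obtain ⟨m, hm, hmS⟩ : ∃ m > 0, ∀ v ∈ S, m ≤ f v := by
    rcases S.eq_empty_or_nonempty with hS | hS
    · exact ⟨1, one_pos, by simp [hS]⟩
    have hSconv : Convex ℝ S :=
      (convex_closedBall 0 1).inter (convex_halfSpace_ge (innerSL ℝ z).isLinear δ)
    have hScl : IsClosed S :=
      isClosed_closedBall.inter (isClosed_le continuous_const (innerSL ℝ z).continuous)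
    obtain ⟨v, hvS, hv⟩ := (hconv.subset (subset_univ S) hSconv).exists_isMinOn_of_isBounded
      hlsc hScl (isBounded_closedBall.subset inter_subset_left) hS
    refine ⟨f v, (hnonneg v).lt_of_ne fun h => ?_, isMinOn_iff.1 hv⟩
    have hδv : δ ≤ ⟪z, v⟫ := hvS.2
    linarith [hsign v h.symm]
  refine ⟨m, hm, fun q hq => ?_⟩
  rcases eq_or_ne q 0 with rfl | hq0
  · simpa using hnonneg 0
  have hqpos : 0 < ‖q‖ := norm_pos_iff.2 hq0
  have hvS : ‖q‖⁻¹ • q ∈ S := by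
    refine ⟨by simp [norm_smul, hqpos.ne'], ?_⟩
    show δ ≤ ⟪z, ‖q‖⁻¹ • q⟫
    rw [real_inner_smul_right, le_inv_mul_iff₀ hqpos]
    linarith
  calc m * ‖q‖ ^ 2 ≤ f (‖q‖⁻¹ • q) * ‖q‖ ^ 2 := by gcongr; exact hmS _ hvS
    _ = f (‖q‖ • ‖q‖⁻¹ • q) := by rw [hhom _ hqpos, mul_comm]
    _ = f q := by rw [smul_smul, mul_inv_cancel₀ hqpos.ne', one_smul]

theorem eventually_inner_sub_le_mul_norm (hconv : ConvexOn ℝ univ f)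
    (hlsc : LowerSemicontinuous f) (hnonneg : ∀ x, 0 ≤ f x)
    (hhom : ∀ l : ℝ, 0 < l → ∀ x, f (l • x) = l ^ 2 * f x)
    (hsign : ∀ x, f x = 0 → ⟪z, x⟫ ≤ 0) {δ : ℝ} (hδ : 0 < δ) :
    ∀ᶠ q in cobounded H, ⟪z, q⟫ - f q ≤ δ * ‖q‖ := by
  obtain ⟨m, hm, hmq⟩ := exists_pos_mul_norm_sq_le hconv hlsc hnonneg hhom hsign hδ
  filter_upwards [eventually_cobounded_le_norm (‖z‖ / m)] with q hq
  by_cases hzq : δ * ‖q‖ ≤ ⟪z, q⟫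
  · have hinner : ⟪z, q⟫ ≤ f q := calc
      ⟪z, q⟫ ≤ ‖z‖ * ‖q‖ := real_inner_le_norm z q
      _ ≤ m * ‖q‖ * ‖q‖ := by gcongr; exact (div_le_iff₀' hm).1 hq
      _ = m * ‖q‖ ^ 2 := by ring
      _ ≤ f q := hmq q hzq
    nlinarith [norm_nonneg q]
  · linarith [hnonneg q]

theorem eventually_le_dualFunctional_div_norm (hconv : ConvexOn ℝ univ f)
    (hlsc : LowerSemicontinuous f) (hnonneg : ∀ x, 0 ≤ f x)
    (hhom : ∀ l : ℝ, 0 < l → ∀ x, f (l • x) = l ^ 2 * f x)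
    (hsign : ∀ x, f x = 0 → ⟪z, x⟫ ≤ 0) {ε c : ℝ} (hc : c < ε) :
    ∀ᶠ q in cobounded H, c ≤ dualFunctional f z ε q / ‖q‖ := by
  filter_upwards [eventually_inner_sub_le_mul_norm hconv hlsc hnonneg hhom hsign (sub_pos.2 hc),
    eventually_cobounded_le_norm 1] with q hq hq1
  rw [le_div_iff₀ (by linarith), dualFunctional]
  linarith

theorem tendsto_dualFunctional_cobounded (hconv : ConvexOn ℝ univ f)
    (hlsc : LowerSemicontinuous f) (hnonneg : ∀ x, 0 ≤ f x)
    (hhom : ∀ l : ℝ, 0 < l → ∀ x, f (l • x) = l ^ 2 * f x)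
    (hsign : ∀ x, f x = 0 → ⟪z, x⟫ ≤ 0) {ε : ℝ} (hε : 0 < ε) :
    Tendsto (dualFunctional f z ε) (cobounded H) atTop := by
  refine tendsto_atTop_mono' _ ?_ (tendsto_norm_cobounded_atTop.const_mul_atTop (half_pos hε))
  filter_upwards [eventually_le_dualFunctional_div_norm hconv hlsc hnonneg hhom hsign
    (half_lt_self hε), eventually_cobounded_le_norm 1] with q hq hq1
  exact (le_div_iff₀ (by linarith)).1 hq

end DualFunctional

theorem dual_functional_coercive_general
    (d : ℕ)
    (μ : Measure (Fin d → ℝ))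
    (E : Type*) [NormedAddCommGroup E] [InnerProductSpace ℝ E]
    (B : Lp ℝ 2 μ →L[ℝ] E)
    (Φ : E → ℝ)
    (hΦconv : ConvexOn ℝ Set.univ Φ)
    (hΦlsc : LowerSemicontinuous Φ)
    (hΦnonneg : ∀ x : E, 0 ≤ Φ x)
    (hΦhom : ∀ l : ℝ, 0 < l → ∀ x : E, Φ (l • x) = l ^ 2 * Φ x)
    (hUC : ∀ q : Lp ℝ 2 μ, Φ (B q) = 0 → ∀ᵐ x ∂μ, q x ≤ 0)
    (z : Lp ℝ 2 μ) (hz : ∀ᵐ x ∂μ, 0 ≤ z x)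
    (ε : ℝ) (hε : 0 < ε)
    (J : Lp ℝ 2 μ → ℝ)
    (hJ : ∀ q : Lp ℝ 2 μ, J q = Φ (B q) - (inner ℝ z q : ℝ) + ε * ‖q‖) :
    (∀ c : ℝ, c < ε → ∃ R : ℝ, ∀ q : Lp ℝ 2 μ, R ≤ ‖q‖ → c ≤ J q / ‖q‖) ∧
    (∀ M : ℝ, ∃ R : ℝ, ∀ q : Lp ℝ 2 μ, R ≤ ‖q‖ → M ≤ J q) ∧
    (∃ qmin : Lp ℝ 2 μ, ∀ q : Lp ℝ 2 μ, J qmin ≤ J q) := by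
  obtain rfl : J = dualFunctional (Φ ∘ B) z ε := funext hJ
  have hconv : ConvexOn ℝ univ (Φ ∘ B) := hΦconv.comp_linearMap B.toLinearMap
  have hlsc : LowerSemicontinuous (Φ ∘ B) := hΦlsc.comp B.continuous
  have hnonneg (q : Lp ℝ 2 μ) : 0 ≤ (Φ ∘ B) q := hΦnonneg (B q)
  have hhom (l : ℝ) (hl : 0 < l) (q : Lp ℝ 2 μ) : (Φ ∘ B) (l • q) = l ^ 2 * (Φ ∘ B) q := by
    simp [hΦhom l hl]
  have hsign (q : Lp ℝ 2 μ) (hq : (Φ ∘ B) q = 0) : ⟪z, q⟫ ≤ 0 :=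
    L2.inner_nonpos_of_ae_nonneg_of_ae_nonpos hz (hUC q hq)
  refine ⟨fun c hc => ?_, fun M => ?_, ?_⟩
  · obtain ⟨R, -, hR⟩ := hasBasis_cobounded_norm.eventually_iff.1
      (eventually_le_dualFunctional_div_norm hconv hlsc hnonneg hhom hsign hc)
    exact ⟨R, hR⟩
  · obtain ⟨R, -, hR⟩ := hasBasis_cobounded_norm.eventually_iff.1
      ((tendsto_dualFunctional_cobounded hconv hlsc hnonneg hhom hsign hε).eventually_ge_atTop M)
    exact ⟨R, hR⟩
  · exact (convexOn_dualFunctional hconv z hε.le).exists_forall_le_of_tendsto_cobounded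
      (lowerSemicontinuous_dualFunctional hlsc z ε)
      (tendsto_dualFunctional_cobounded hconv hlsc hnonneg hhom hsign hε)

/-- Coercivity of the dual functional: if `Φ` is convex, lsc, nonnegative,
positively 2-homogeneous, and `Φ(Bq) = 0` implies `q ≤ 0` a.e., then for
`J(q) = Φ(Bq) - ⟨z,q⟩ + ε‖q‖` with `z ≥ 0` a.e. and `ε > 0`, we have
`liminf_{‖q‖→∞} J(q)/‖q‖ ≥ ε`; in particular `J(q) → +∞` as `‖q‖ → ∞`, and `J`
attains its minimum on `L²(Ω)`. -/
theorem dual_functional_coercive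
    (d : ℕ) (hd : 1 ≤ d)
    (Ω : Set (Fin d → ℝ)) (hΩne : Ω.Nonempty) (hΩop : IsOpen Ω)
    (hΩbd : Bornology.IsBounded Ω)
    (μ : Measure (Fin d → ℝ)) (hμ : μ = volume.restrict Ω)
    (E : Type*) [NormedAddCommGroup E] [InnerProductSpace ℝ E] [CompleteSpace E]
    (B : Lp ℝ 2 μ →L[ℝ] E)
    (Φ : E → ℝ)
    (hΦconv : ConvexOn ℝ Set.univ Φ)
    (hΦlsc : LowerSemicontinuous Φ)
    (hΦnonneg : ∀ x : E, 0 ≤ Φ x)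
    (hΦhom : ∀ l : ℝ, 0 < l → ∀ x : E, Φ (l • x) = l ^ 2 * Φ x)
    (hUC : ∀ q : Lp ℝ 2 μ, Φ (B q) = 0 → ∀ᵐ x ∂μ, q x ≤ 0)
    (z : Lp ℝ 2 μ) (hz : ∀ᵐ x ∂μ, 0 ≤ z x)
    (ε : ℝ) (hε : 0 < ε)
    (J : Lp ℝ 2 μ → ℝ)
    (hJ : ∀ q : Lp ℝ 2 μ, J q = Φ (B q) - (inner ℝ z q : ℝ) + ε * ‖q‖) :
    (∀ c : ℝ, c < ε → ∃ R : ℝ, ∀ q : Lp ℝ 2 μ, R ≤ ‖q‖ → c ≤ J q / ‖q‖) ∧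
    (∀ M : ℝ, ∃ R : ℝ, ∀ q : Lp ℝ 2 μ, R ≤ ‖q‖ → M ≤ J q) ∧
    (∃ qmin : Lp ℝ 2 μ, ∀ q : Lp ℝ 2 μ, J qmin ≤ J q) :=
  dual_functional_coercive_general d μ E B Φ hΦconv hΦlsc hΦnonneg hΦhom hUC z hz ε hε J hJ
end

section
/- Subdifferential of an integral functional: Let f : H → ℝ be convex and Lipschitz continuous, and define F : L²(0,T;H) → ℝ by F(u) := ∫_0^T f(u(t)) dt. Then for every u ∈ L²(0,T;H), ∂F(u) = {p ∈ L²(0,T;H) : p(t) ∈ ∂f(u(t)) for a.e. t ∈ (0,T)}. -/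
open MeasureTheory
open scoped ENNReal NNReal InnerProductSpace

/-!
Integrating the pointwise subgradient inequality gives one inclusion. For the other, testing the
subgradient inequality of `F` at `u` against `w = y` on a measurable set `s` and `w = u` off `s`
gives `∫_s (f y - f u - ⟪p, y - u⟫) ≥ 0` for every `s`, so for each fixed `y` the pointwise
inequality holds off a null set depending on `y`. Each such inequality cuts out a closed subset
of `H × H`, and `(u, p)` takes values a.e. in a separable, hence hereditarily Lindelöf, set, so
countably many `y` already force all of them.
-/

theorem MeasureTheory.AEStronglyMeasurable.ae_forall_mem_of_forall_ae_mem
    {α X ι : Type*} [MeasurableSpace α] {μ : Measure α} [TopologicalSpace X]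
    [TopologicalSpace.PseudoMetrizableSpace X] {g : α → X} (hg : AEStronglyMeasurable g μ)
    {C : ι → Set X} (hC : ∀ i, IsClosed (C i)) (h : ∀ i, ∀ᵐ t ∂μ, g t ∈ C i) :
    ∀ᵐ t ∂μ, ∀ i, g t ∈ C i := by
  obtain ⟨S, hS, hgS⟩ := hg.isSeparable_ae_range
  have := hS.secondCountableTopology
  obtain ⟨J, hJ, hJU⟩ := TopologicalSpace.isOpen_iUnion_countable
    (fun i => ((↑) : S → X) ⁻¹' (C i)ᶜ) fun i => (hC i).isOpen_compl.preimage continuous_subtype_val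
  filter_upwards [hgS, (ae_ball_iff hJ).2 fun i _ => h i] with t htS htJ i
  by_contra hti
  have hmem : (⟨g t, htS⟩ : S) ∈ ⋃ i, ((↑) : S → X) ⁻¹' (C i)ᶜ := Set.mem_iUnion.2 ⟨i, hti⟩
  rw [← hJU] at hmem
  obtain ⟨j, hj, hgj⟩ := Set.mem_iUnion₂.1 hmem
  exact hgj (htJ j hj)

theorem LipschitzWith.integrable_comp {α E F : Type*} [MeasurableSpace α] {μ : Measure α}
    [IsFiniteMeasure μ] [NormedAddCommGroup E] [NormedAddCommGroup F] {f : E → F} {K : ℝ≥0}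
    (hf : LipschitzWith K f) {v : α → E} (hv : Integrable v μ) :
    Integrable (fun t => f (v t)) μ := by
  refine ((hv.norm.const_mul K).add (integrable_const ‖f 0‖)).mono'
    (hf.continuous.comp_aestronglyMeasurable hv.1) (ae_of_all _ fun t => ?_)
  have hlip := hf.norm_sub_le (v t) 0
  rw [sub_zero] at hlip
  simp only [Pi.add_apply]
  linarith [norm_le_norm_sub_add (f (v t)) (f 0)]

section IntegralFunctional

variable {α E : Type*} [MeasurableSpace α] {μ : Measure α} [IsFiniteMeasure μ]
  [NormedAddCommGroup E] [InnerProductSpace ℝ E] {f : E → ℝ} {K : ℝ≥0}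

theorem integral_add_inner_le_of_ae_subgradient (hf : LipschitzWith K f) {u p : Lp E 2 μ}
    (hp : ∀ᵐ t ∂μ, ∀ y, f (u t) + ⟪p t, y - u t⟫_ℝ ≤ f y) (w : Lp E 2 μ) :
    ∫ t, f (u t) ∂μ + ⟪p, w - u⟫_ℝ ≤ ∫ t, f (w t) ∂μ := by
  have hfu := hf.integrable_comp ((Lp.memLp u).integrable one_le_two)
  have hfw := hf.integrable_comp ((Lp.memLp w).integrable one_le_two)
  rw [L2.inner_def, ← integral_add hfu (L2.integrable_inner p (w - u))]
  refine integral_mono_ae (hfu.add (L2.integrable_inner p (w - u))) hfw ?_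
  filter_upwards [hp, Lp.coeFn_sub w u] with t ht hsub
  simpa only [hsub, Pi.sub_apply] using ht (w t)

theorem ae_subgradient_of_integral_add_inner_le (hf : LipschitzWith K f) {u p : Lp E 2 μ}
    (hp : ∀ w : Lp E 2 μ, ∫ t, f (u t) ∂μ + ⟪p, w - u⟫_ℝ ≤ ∫ t, f (w t) ∂μ) (y : E) :
    ∀ᵐ t ∂μ, f (u t) + ⟪p t, y - u t⟫_ℝ ≤ f y := by
  classical
  set g : α → ℝ := fun t => f y - f (u t) - ⟪p t, y - u t⟫_ℝ
  have hfu := hf.integrable_comp ((Lp.memLp u).integrable one_le_two)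
  have hinner : Integrable (fun t => ⟪p t, y - u t⟫_ℝ) μ := by
    refine ((((Lp.memLp p).integrable one_le_two).inner_const y).sub
      (L2.integrable_inner p u)).congr (ae_of_all _ fun t => ?_)
    exact (inner_sub_right _ _ _).symm
  suffices 0 ≤ᵐ[μ] g by
    filter_upwards [this] with t ht
    simp only [g, Pi.zero_apply] at ht
    linarith
  refine ae_nonneg_of_forall_setIntegral_nonneg (((integrable_const _).sub hfu).sub hinner)
    fun s hs _ => ?_
  obtain ⟨w, hw⟩ : ∃ w : Lp E 2 μ, w =ᵐ[μ] s.piecewise (fun _ => y) u :=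
    ⟨_, (MemLp.piecewise hs (memLp_const y) ((Lp.memLp u).restrict _)).coeFn_toLp⟩
  have hfw := hf.integrable_comp ((Lp.memLp w).integrable one_le_two)
  have key : ∫ t in s, g t ∂μ = ∫ t, (f (w t) - f (u t) - ⟪p t, (w - u) t⟫_ℝ) ∂μ := by
    rw [← integral_indicator hs]
    refine integral_congr_ae ?_
    filter_upwards [hw, Lp.coeFn_sub w u] with t hwt hsub
    simp only [hsub, Pi.sub_apply, hwt]
    by_cases ht : t ∈ s <;> simp [ht, g]
  rw [integral_sub (f := fun t => f (w t) - f (u t)) (hfw.sub hfu) (L2.integrable_inner _ _),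
    integral_sub hfw hfu, ← L2.inner_def] at key
  linarith [hp w]

theorem integral_add_inner_le_iff_ae_subgradient (hf : LipschitzWith K f) (u p : Lp E 2 μ) :
    (∀ w : Lp E 2 μ, ∫ t, f (u t) ∂μ + ⟪p, w - u⟫_ℝ ≤ ∫ t, f (w t) ∂μ) ↔
      ∀ᵐ t ∂μ, ∀ y, f (u t) + ⟪p t, y - u t⟫_ℝ ≤ f y := by
  refine ⟨fun hp => ?_, integral_add_inner_le_of_ae_subgradient hf⟩
  have hclosed (y : E) : IsClosed {z : E × E | f z.1 + ⟪z.2, y - z.1⟫_ℝ ≤ f y} :=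
    have hfc := hf.continuous
    isClosed_le (by fun_prop) continuous_const
  have hup : AEStronglyMeasurable (fun t => (u t, p t)) μ :=
    (Lp.aestronglyMeasurable u).prodMk (Lp.aestronglyMeasurable p)
  exact hup.ae_forall_mem_of_forall_ae_mem hclosed (ae_subgradient_of_integral_add_inner_le hf hp)

end IntegralFunctional

theorem subdifferential_of_integral_functional_general
    {H : Type*} [NormedAddCommGroup H] [InnerProductSpace ℝ H]
    (T : ℝ)
    (ν : Measure ℝ) (hν : ν = volume.restrict (Set.Ioo 0 T))
    (f : H → ℝ)
    (K : ℝ≥0) (hlip : LipschitzWith K f)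
    (F : Lp H 2 ν → ℝ)
    (hF : ∀ u : Lp H 2 ν, F u = ∫ t, f (u t) ∂ν) :
    ∀ u : Lp H 2 ν,
      {p : Lp H 2 ν | ∀ w : Lp H 2 ν, F u + (inner ℝ p (w - u) : ℝ) ≤ F w}
        = {p : Lp H 2 ν |
            ∀ᵐ t ∂ν, ∀ y : H, f (u t) + (inner ℝ (p t) (y - u t) : ℝ) ≤ f y} := by
  have : IsFiniteMeasure ν := hν ▸ isFiniteMeasure_restrict.2 measure_Ioo_lt_top.ne
  intro u
  ext p
  simpa only [hF, Set.mem_ofPred_eq] using integral_add_inner_le_iff_ae_subgradient hlip u p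

/-- Subdifferential of an integral functional: for `f : H → ℝ` convex and
Lipschitz and `F(u) = ∫_0^T f(u(t)) dt` on `L²(0,T;H)`, one has
`∂F(u) = {p ∈ L²(0,T;H) : p(t) ∈ ∂f(u(t)) for a.e. t}`. -/
theorem subdifferential_of_integral_functional
    {H : Type*} [NormedAddCommGroup H] [InnerProductSpace ℝ H] [CompleteSpace H]
    (T : ℝ) (hT : 0 < T)
    (ν : Measure ℝ) (hν : ν = volume.restrict (Set.Ioo 0 T))
    (f : H → ℝ)
    (hconv : ConvexOn ℝ Set.univ f)
    (K : ℝ≥0) (hlip : LipschitzWith K f)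
    (F : Lp H 2 ν → ℝ)
    (hF : ∀ u : Lp H 2 ν, F u = ∫ t, f (u t) ∂ν) :
    ∀ u : Lp H 2 ν,
      {p : Lp H 2 ν | ∀ w : Lp H 2 ν, F u + (inner ℝ p (w - u) : ℝ) ≤ F w}
        = {p : Lp H 2 ν |
            ∀ᵐ t ∂ν, ∀ y : H, f (u t) + (inner ℝ (p t) (y - u t) : ℝ) ≤ f y} :=
  subdifferential_of_integral_functional_general T ν hν f K hlip F hF
end

section
/- Uniqueness criterion for the relaxed bathtub problem: Let v ∈ L²(Ω). (i) If h(v) > 0 and |{v > h(v)}| + |{v = h(v)}| = L|Ω|, then the maximiser of u ↦ ∫_Ω u·v over Ū_L is unique (up to a.e. equality). (ii) If h(v) > 0 and |{v > h(v)}| < L|Ω| < |{v > h(v)}| + |{v = h(v)}|, then there exist at least two maximisers that are not a.e. equal. (iii) If h(v) = 0, |{v = 0}| > 0 and |{v > 0}| < L|Ω|, then there exist at least two maximisers that are not a.e. equal. -/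
open MeasureTheory Set

/-! For `0 ≤ u, w ≤ 1` and any level `h`,
`∫ u v - ∫ w v = ∫ (u - w) (v - h) + h (∫ u - ∫ w)`.
If `u` is `1` on `{v > h}` and `0` on `{v < h}`, the first term is pointwise nonnegative, and for
`h ≥ 0` so is the second as soon as `u` exhausts the budget `A` or `h = 0`: such profiles are
maximisers. In case (i) the profile `1_{v ≥ h}` has mass exactly `A`, and equality in both terms
forces every maximiser to coincide with it. In cases (ii) and (iii) the level set `{v = h}` has
positive measure and there is mass to spare, so it can be filled in two essentially different ways:
in (iii) by `0` and by a small constant; in (ii) by the constant `c` with the right mass and by a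
ramp `min 1 (max 0 (s - x₀))` in one coordinate with the same mass (intermediate value theorem),
which equals `c` only on a null hyperplane. -/

section RelaxedBathtub

variable {α : Type*} {A h : ℝ} {u v w φ : α → ℝ}

noncomputable def bathtubProfile (v : α → ℝ) (h : ℝ) (φ : α → ℝ) : α → ℝ :=
  {x | h < v x}.indicator 1 + {x | v x = h}.indicator φ

section Profile

variable {x : α}

lemma bathtubProfile_of_lt (hx : h < v x) : bathtubProfile v h φ x = 1 := by
  simp [bathtubProfile, hx, hx.ne']

lemma bathtubProfile_of_eq (hx : v x = h) : bathtubProfile v h φ x = φ x := by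
  simp [bathtubProfile, hx]

lemma bathtubProfile_of_gt (hx : v x < h) : bathtubProfile v h φ x = 0 := by
  simp [bathtubProfile, hx.not_gt, hx.ne]

lemma bathtubProfile_mem_Icc (hφ : ∀ x, φ x ∈ Icc 0 1) (x : α) :
    bathtubProfile v h φ x ∈ Icc 0 1 := by
  rcases lt_trichotomy (v x) h with hx | hx | hx
  · simp [bathtubProfile_of_gt hx]
  · rw [bathtubProfile_of_eq hx]; exact hφ x
  · simp [bathtubProfile_of_lt hx]

lemma bathtubProfile_sub_mul_sub_nonneg {b : ℝ} (hb : b ∈ Icc 0 1) :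
    0 ≤ (bathtubProfile v h φ x - b) * (v x - h) := by
  rcases lt_trichotomy (v x) h with hx | hx | hx
  · rw [bathtubProfile_of_gt hx]; nlinarith [hb.1]
  · simp [hx]
  · rw [bathtubProfile_of_lt hx]; nlinarith [hb.2]

lemma le_bathtubProfile_one_of_sub_mul_sub_eq_zero {b : ℝ} (hb : b ≤ 1)
    (h0 : (bathtubProfile v h 1 x - b) * (v x - h) = 0) : b ≤ bathtubProfile v h 1 x := by
  rcases eq_or_ne (v x) h with hx | hx
  · rw [bathtubProfile_of_eq hx]; exact hb
  · have := (mul_eq_zero.1 h0).resolve_right (sub_ne_zero.2 hx)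
    linarith

end Profile

variable [MeasurableSpace α] {μ : Measure α}

def IsAdmissible (μ : Measure α) (A : ℝ) (u : α → ℝ) : Prop :=
  MemLp u 2 μ ∧ (∀ᵐ x ∂μ, u x ∈ Icc 0 1) ∧ ∫ x, u x ∂μ ≤ A

def IsRelaxedBathtubMaximizer (μ : Measure α) (A : ℝ) (v u : α → ℝ) : Prop :=
  IsAdmissible μ A u ∧ ∀ w, IsAdmissible μ A w → ∫ x, w x * v x ∂μ ≤ ∫ x, u x * v x ∂μ

lemma IsAdmissible.integrable_mul (hu : IsAdmissible μ A u) (hv : Integrable v μ) :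
    Integrable (fun x => u x * v x) μ :=
  hv.bdd_mul hu.1.1 <| hu.2.1.mono fun x hx => by
    rw [Real.norm_eq_abs, abs_le]; exact ⟨by linarith [hx.1], hx.2⟩

lemma aestronglyMeasurable_bathtubProfile (hv : AEStronglyMeasurable v μ)
    (hφ : AEStronglyMeasurable φ μ) : AEStronglyMeasurable (bathtubProfile v h φ) μ :=
  (aestronglyMeasurable_const.indicator₀ (aestronglyMeasurable_const.nullMeasurableSet_lt hv)).add
    (hφ.indicator₀ (hv.nullMeasurableSet_eq_fun aestronglyMeasurable_const))

theorem not_bathtubProfile_ae_eq {φ₁ φ₂ : α → ℝ} (hv : AEStronglyMeasurable v μ)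
    (hE : μ {x | v x = h} ≠ 0) (hne : ∀ᵐ x ∂μ.restrict {x | v x = h}, φ₁ x ≠ φ₂ x) :
    ¬ bathtubProfile v h φ₁ =ᵐ[μ] bathtubProfile v h φ₂ := by
  intro heq
  have hE' : NullMeasurableSet {x | v x = h} μ :=
    hv.nullMeasurableSet_eq_fun aestronglyMeasurable_const
  have hfalse : ∀ᵐ x ∂μ.restrict {x | v x = h}, False := by
    filter_upwards [ae_restrict_of_ae heq, ae_restrict_mem₀ hE', hne] with x hx hxE hxne
    rw [bathtubProfile_of_eq hxE, bathtubProfile_of_eq hxE] at hx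
    exact hxne hx
  exact hE (by simpa using hfalse)

variable [IsFiniteMeasure μ]

lemma IsAdmissible.integrable (hu : IsAdmissible μ A u) : Integrable u μ :=
  hu.1.integrable one_le_two

lemma IsAdmissible.integrable_sub_mul_sub (hu : IsAdmissible μ A u) (hw : IsAdmissible μ A w)
    (hv : Integrable v μ) (h : ℝ) : Integrable (fun x => (u x - w x) * (v x - h)) μ :=
  (hv.sub (integrable_const h)).bdd_mul (c := 1) (hu.1.1.sub hw.1.1) <| by
    filter_upwards [hu.2.1, hw.2.1] with x hux hwx
    rw [Real.norm_eq_abs, abs_le]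
    constructor <;> linarith [hux.1, hux.2, hwx.1, hwx.2]

lemma integral_mul_sub_integral_mul (hu : IsAdmissible μ A u)
    (hw : IsAdmissible μ A w) (hv : Integrable v μ) (h : ℝ) :
    ∫ x, u x * v x ∂μ - ∫ x, w x * v x ∂μ
      = ∫ x, (u x - w x) * (v x - h) ∂μ + h * (∫ x, u x ∂μ - ∫ x, w x ∂μ) := by
  have huv := hu.integrable_mul hv
  have hwv := hw.integrable_mul hv
  have hu' := hu.integrable.const_mul h
  have hw' := hw.integrable.const_mul h
  have : ∫ x, (u x - w x) * (v x - h) ∂μ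
      = ∫ x, (u x * v x - w x * v x) - (h * u x - h * w x) ∂μ :=
    integral_congr_ae (ae_of_all _ fun x => by ring)
  rw [this, integral_sub, integral_sub huv hwv, integral_sub hu' hw', integral_const_mul,
    integral_const_mul]
  · ring
  exacts [huv.sub hwv, hu'.sub hw']

lemma integral_bathtubProfile (hv : AEStronglyMeasurable v μ) (hφ : Integrable φ μ) :
    ∫ x, bathtubProfile v h φ x ∂μ = μ.real {x | h < v x} + ∫ x in {x | v x = h}, φ x ∂μ := by
  have hP : NullMeasurableSet {x | h < v x} μ :=
    aestronglyMeasurable_const.nullMeasurableSet_lt hv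
  have hE : NullMeasurableSet {x | v x = h} μ :=
    hv.nullMeasurableSet_eq_fun aestronglyMeasurable_const
  have h1 : Integrable ({x | h < v x}.indicator (1 : α → ℝ)) μ := (integrable_const 1).indicator₀ hP
  simp only [bathtubProfile, Pi.add_apply]
  rw [integral_add h1 (hφ.indicator₀ hE), integral_indicator₀ hE, integral_indicator₀ hP]
  simp

lemma isAdmissible_bathtubProfile (hv : AEStronglyMeasurable v μ) (hφm : AEStronglyMeasurable φ μ)
    (hφ : ∀ x, φ x ∈ Icc 0 1) (hA : ∫ x, bathtubProfile v h φ x ∂μ ≤ A) :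
    IsAdmissible μ A (bathtubProfile v h φ) := by
  refine ⟨MemLp.of_bound (aestronglyMeasurable_bathtubProfile hv hφm) 1 (ae_of_all _ fun x => ?_),
    ae_of_all _ (bathtubProfile_mem_Icc hφ), hA⟩
  have := bathtubProfile_mem_Icc (v := v) (h := h) hφ x
  rw [Real.norm_eq_abs, abs_le]
  exact ⟨by linarith [this.1], this.2⟩

theorem isRelaxedBathtubMaximizer_bathtubProfile (hv : Integrable v μ)
    (hφm : AEStronglyMeasurable φ μ) (hφ : ∀ x, φ x ∈ Icc 0 1) (hh : 0 ≤ h)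
    (hA : ∫ x, bathtubProfile v h φ x ∂μ ≤ A)
    (hslack : h = 0 ∨ ∫ x, bathtubProfile v h φ x ∂μ = A) :
    IsRelaxedBathtubMaximizer μ A v (bathtubProfile v h φ) := by
  have hu := isAdmissible_bathtubProfile hv.1 hφm hφ hA
  refine ⟨hu, fun w hw => ?_⟩
  have hgap := integral_mul_sub_integral_mul hu hw hv h
  have hpointwise : 0 ≤ ∫ x, (bathtubProfile v h φ x - w x) * (v x - h) ∂μ :=
    integral_nonneg_of_ae (hw.2.1.mono fun x hx => bathtubProfile_sub_mul_sub_nonneg hx)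
  have hbudget : 0 ≤ h * (∫ x, bathtubProfile v h φ x ∂μ - ∫ x, w x ∂μ) := by
    rcases hslack with rfl | hfull
    · simp
    · rw [hfull]; exact mul_nonneg hh (sub_nonneg.2 hw.2.2)
  linarith

lemma integral_bathtubProfile_one (hv : AEStronglyMeasurable v μ) :
    ∫ x, bathtubProfile v h 1 x ∂μ = μ.real {x | h < v x} + μ.real {x | v x = h} := by
  rw [integral_bathtubProfile (φ := 1) hv (integrable_const 1)]
  simp

theorem IsRelaxedBathtubMaximizer.ae_eq_bathtubProfile_one (hv : Integrable v μ) (hh : 0 < h)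
    (hA : μ.real {x | h < v x} + μ.real {x | v x = h} = A)
    (hu : IsRelaxedBathtubMaximizer μ A v u) : u =ᵐ[μ] bathtubProfile v h 1 := by
  set u' := bathtubProfile v h 1
  have hint' : ∫ x, u' x ∂μ = A := (integral_bathtubProfile_one hv.1).trans hA
  have hu' : IsRelaxedBathtubMaximizer μ A v u' :=
    isRelaxedBathtubMaximizer_bathtubProfile hv aestronglyMeasurable_const
      (fun _ => ⟨zero_le_one, le_rfl⟩) hh.le hint'.le (Or.inr hint')
  have hgap := integral_mul_sub_integral_mul hu'.1 hu.1 hv h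
  have hsame : ∫ x, u' x * v x ∂μ = ∫ x, u x * v x ∂μ := le_antisymm (hu.2 u' hu'.1) (hu'.2 u hu.1)
  have hD : 0 ≤ᵐ[μ] fun x => (u' x - u x) * (v x - h) :=
    hu.1.2.1.mono fun x hx => bathtubProfile_sub_mul_sub_nonneg hx
  have hbudget : 0 ≤ h * (∫ x, u' x ∂μ - ∫ x, u x ∂μ) :=
    mul_nonneg hh.le (by linarith [hu.1.2.2])
  have hD0 : ∫ x, (u' x - u x) * (v x - h) ∂μ = 0 := by
    linarith [integral_nonneg_of_ae hD]
  have hint : ∫ x, u x ∂μ = ∫ x, u' x ∂μ := by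
    have : h * (∫ x, u' x ∂μ - ∫ x, u x ∂μ) = 0 := by linarith
    linarith [(mul_eq_zero.1 this).resolve_left hh.ne']
  -- Equality in the bathtub inequality forces `u = u'` off `{v = h}`, and `u' = 1` on it.
  have hle : u ≤ᵐ[μ] u' := by
    have hzero := (integral_eq_zero_iff_of_nonneg_ae hD
      (hu'.1.integrable_sub_mul_sub hu.1 hv h)).1 hD0
    filter_upwards [hzero, hu.1.2.1] with x hx hux
    exact le_bathtubProfile_one_of_sub_mul_sub_eq_zero hux.2 hx
  exact (integral_eq_iff_of_ae_le hu.1.integrable hu'.1.integrable hle).1 hint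

theorem exists_ne_relaxedBathtubMaximizers_of_zero (hv : Integrable v μ)
    (hE : μ {x | v x = 0} ≠ 0) (hP : μ.real {x | 0 < v x} < A) :
    ∃ u₁ u₂, IsRelaxedBathtubMaximizer μ A v u₁ ∧ IsRelaxedBathtubMaximizer μ A v u₂ ∧
      ¬ u₁ =ᵐ[μ] u₂ := by
  have hmE : 0 < μ.real {x | v x = 0} := ENNReal.toReal_pos hE (measure_ne_top _ _)
  set c := min 1 ((A - μ.real {x | 0 < v x}) / μ.real {x | v x = 0})
  have hc0 : 0 < c := lt_min one_pos (div_pos (by linarith) hmE)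
  have hcA : c * μ.real {x | v x = 0} ≤ A - μ.real {x | 0 < v x} :=
    (le_div_iff₀ hmE).1 (min_le_right _ _)
  refine ⟨bathtubProfile v 0 fun _ => 0, bathtubProfile v 0 fun _ => c,
    isRelaxedBathtubMaximizer_bathtubProfile hv aestronglyMeasurable_const
      (fun _ => ⟨le_rfl, zero_le_one⟩) le_rfl ?_ (Or.inl rfl),
    isRelaxedBathtubMaximizer_bathtubProfile hv aestronglyMeasurable_const
      (fun _ => ⟨hc0.le, min_le_left _ _⟩) le_rfl ?_ (Or.inl rfl),
    not_bathtubProfile_ae_eq hv.1 hE (ae_of_all _ fun _ => hc0.ne)⟩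
  · rw [integral_bathtubProfile hv.1 (integrable_const 0)]
    simpa using hP.le
  · rw [integral_bathtubProfile hv.1 (integrable_const c)]
    simp only [setIntegral_const, smul_eq_mul]
    linarith

theorem exists_integral_ramp_eq {ν : Measure α} [IsFiniteMeasure ν] {f : α → ℝ}
    (hf : Measurable f) {R : ℝ} (hR : ∀ᵐ x ∂ν, |f x| ≤ R) {c : ℝ} (hc : c ∈ Icc 0 1) :
    ∃ s, ∫ x, min 1 (max 0 (s - f x)) ∂ν = c * ν.real univ := by
  set G := fun s => ∫ x, min 1 (max 0 (s - f x)) ∂ν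
  have hG : Continuous G := by
    refine continuous_of_dominated (bound := fun _ => 1)
      (fun s => (by fun_prop : Measurable fun x => min 1 (max 0 (s - f x))).aestronglyMeasurable)
      (fun s => ae_of_all _ fun x => ?_) (integrable_const 1) (ae_of_all _ fun x => by fun_prop)
    rw [Real.norm_eq_abs, abs_le]
    exact ⟨by linarith [le_min zero_le_one (le_max_left 0 (s - f x))], min_le_left _ _⟩
  have hlow : G (-|R|) = 0 := by
    refine integral_eq_zero_of_ae (hR.mono fun x hx => ?_)
    have : -|R| - f x ≤ 0 := by linarith [neg_abs_le (f x), le_abs_self R]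
    simp [max_eq_left this]
  have hhigh : G (|R| + 1) = ν.real univ := by
    rw [← mul_one (ν.real univ), ← smul_eq_mul, ← integral_const]
    refine integral_congr_ae (hR.mono fun x hx => ?_)
    have : 1 ≤ |R| + 1 - f x := by linarith [le_abs_self (f x), le_abs_self R]
    simp [max_eq_right (zero_le_one.trans this), min_eq_left this]
  obtain ⟨s, -, hs⟩ := intermediate_value_Icc (by linarith [abs_nonneg R] : -|R| ≤ |R| + 1)
    hG.continuousOn (show c * ν.real univ ∈ Icc (G (-|R|)) (G (|R| + 1)) by
      rw [hlow, hhigh]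
      exact ⟨mul_nonneg hc.1 measureReal_nonneg, mul_le_of_le_one_left measureReal_nonneg hc.2⟩)
  exact ⟨s, hs⟩

theorem exists_ne_relaxedBathtubMaximizers_of_lt_of_lt (hv : Integrable v μ) (hh : 0 < h)
    {f : α → ℝ} (hf : Measurable f) {R : ℝ} (hR : ∀ᵐ x ∂μ, |f x| ≤ R)
    (hfib : ∀ t, μ (f ⁻¹' {t}) = 0) (hlt : μ.real {x | h < v x} < A)
    (hgt : A < μ.real {x | h < v x} + μ.real {x | v x = h}) :
    ∃ u₁ u₂, IsRelaxedBathtubMaximizer μ A v u₁ ∧ IsRelaxedBathtubMaximizer μ A v u₂ ∧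
      ¬ u₁ =ᵐ[μ] u₂ := by
  set E := {x | v x = h}
  have hmE : 0 < μ.real E := by linarith
  set c := (A - μ.real {x | h < v x}) / μ.real E
  have hc : c ∈ Ioo 0 1 := ⟨div_pos (by linarith) hmE, (div_lt_one hmE).2 (by linarith)⟩
  have hcE : μ.real {x | h < v x} + c * μ.real E = A := by
    rw [div_mul_cancel₀ _ hmE.ne']; ring
  obtain ⟨s, hs⟩ := exists_integral_ramp_eq (ν := μ.restrict E) hf (ae_restrict_of_ae hR)
    (Ioo_subset_Icc_self hc)
  rw [measureReal_restrict_apply_univ] at hs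
  set ψ := fun x => min 1 (max 0 (s - f x))
  have hψ : ∀ x, ψ x ∈ Icc 0 1 := fun x =>
    ⟨le_min zero_le_one (le_max_left _ _), min_le_left _ _⟩
  have hint₁ : ∫ x, bathtubProfile v h (fun _ => c) x ∂μ = A := by
    rw [integral_bathtubProfile hv.1 (integrable_const c), setIntegral_const, smul_eq_mul,
      mul_comm, hcE]
  have hint₂ : ∫ x, bathtubProfile v h ψ x ∂μ = A := by
    rw [integral_bathtubProfile hv.1 ((integrable_const 1).mono' (by fun_prop) _), hs, hcE]
    exact ae_of_all _ fun x => by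
      rw [Real.norm_eq_abs, abs_of_nonneg (hψ x).1]; exact (hψ x).2
  -- `ψ = c` only on the null fibre `f = s - c`.
  have hne : ∀ᵐ x ∂μ.restrict E, c ≠ ψ x :=
    ae_restrict_of_ae <| (measure_eq_zero_iff_ae_notMem.1 (hfib (s - c))).mono
      fun x hx hcx => hx (by simp only [mem_preimage, mem_singleton_iff]; grind)
  exact ⟨_, _,
    isRelaxedBathtubMaximizer_bathtubProfile hv aestronglyMeasurable_const
      (fun _ => Ioo_subset_Icc_self hc) hh.le hint₁.le (Or.inr hint₁),
    isRelaxedBathtubMaximizer_bathtubProfile hv (by fun_prop) hψ hh.le hint₂.le (Or.inr hint₂),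
    not_bathtubProfile_ae_eq hv.1 (ENNReal.toReal_pos_iff.1 hmE).1.ne' hne⟩

end RelaxedBathtub

theorem relaxed_bathtub_uniqueness_criterion_general
    (d : ℕ) (hd : 1 ≤ d)
    (Ω : Set (Fin d → ℝ))
    (hΩbd : Bornology.IsBounded Ω)
    (μ : Measure (Fin d → ℝ)) (hμ : μ = volume.restrict Ω)
    (v : (Fin d → ℝ) → ℝ) (hv : MemLp v 2 μ)
    (A : ℝ)
    (hvv : ℝ)
    (IsMax : ((Fin d → ℝ) → ℝ) → Prop)
    (hIsMax : ∀ u : (Fin d → ℝ) → ℝ,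
      IsMax u ↔ (MemLp u 2 μ ∧ (∀ᵐ x ∂μ, 0 ≤ u x ∧ u x ≤ 1) ∧
        (∫ x, u x ∂μ) ≤ A ∧
        (∀ w : (Fin d → ℝ) → ℝ, MemLp w 2 μ →
          (∀ᵐ x ∂μ, 0 ≤ w x ∧ w x ≤ 1) → (∫ x, w x ∂μ) ≤ A →
          (∫ x, w x * v x ∂μ) ≤ ∫ x, u x * v x ∂μ))) :
    (0 < hvv →
      (μ {y | v y > hvv}).toReal + (μ {y | v y = hvv}).toReal = A →
      ∀ u₁ u₂ : (Fin d → ℝ) → ℝ, IsMax u₁ → IsMax u₂ → u₁ =ᵐ[μ] u₂) ∧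
    (0 < hvv →
      (μ {y | v y > hvv}).toReal < A →
      A < (μ {y | v y > hvv}).toReal + (μ {y | v y = hvv}).toReal →
      ∃ u₁ u₂ : (Fin d → ℝ) → ℝ, IsMax u₁ ∧ IsMax u₂ ∧ ¬ u₁ =ᵐ[μ] u₂) ∧
    (hvv = 0 →
      0 < μ {y | v y = 0} →
      (μ {y | v y > 0}).toReal < A →
      ∃ u₁ u₂ : (Fin d → ℝ) → ℝ, IsMax u₁ ∧ IsMax u₂ ∧ ¬ u₁ =ᵐ[μ] u₂) := by
  have : IsFiniteMeasure μ := ⟨by rw [hμ, Measure.restrict_apply_univ]; exact hΩbd.measure_lt_top⟩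
  have hv₁ : Integrable v μ := hv.integrable one_le_two
  have hmax : ∀ u, IsMax u ↔ IsRelaxedBathtubMaximizer μ A v u := fun u => by
    simp only [hIsMax, IsRelaxedBathtubMaximizer, IsAdmissible, mem_Icc, and_imp, and_assoc]
  simp only [hmax]
  let i₀ : Fin d := ⟨0, hd⟩
  obtain ⟨R, hR⟩ := hΩbd.subset_closedBall 0
  have hcoord : ∀ᵐ x ∂μ, |x i₀| ≤ R := by
    rw [hμ]
    refine ae_restrict_of_ae_restrict_of_subset hR
      (ae_restrict_of_forall_mem Metric.isClosed_closedBall.measurableSet fun x hx => ?_)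
    rw [← Real.norm_eq_abs]
    exact (norm_le_pi_norm x i₀).trans (mem_closedBall_zero_iff.1 hx)
  have hfib : ∀ t, μ ((fun x => x i₀) ⁻¹' {t}) = 0 := fun t => by
    rw [hμ, ← nonpos_iff_eq_zero,
      ← Measure.pi_hyperplane (fun _ : Fin d => (volume : Measure ℝ)) i₀ t]
    exact Measure.restrict_apply_le _ _
  refine ⟨fun hpos hA u₁ u₂ h₁ h₂ => ?_, fun hpos hlt hgt => ?_, fun h0 hE hlt => ?_⟩
  · exact (h₁.ae_eq_bathtubProfile_one hv₁ hpos hA).trans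
      (h₂.ae_eq_bathtubProfile_one hv₁ hpos hA).symm
  · exact exists_ne_relaxedBathtubMaximizers_of_lt_of_lt hv₁ hpos (measurable_pi_apply i₀) hcoord
      hfib hlt hgt
  · subst h0
    exact exists_ne_relaxedBathtubMaximizers_of_zero hv₁ hE.ne' hlt

/-- Uniqueness criterion for the relaxed bathtub problem:
(i) if `h(v) > 0` and `|{v > h(v)}| + |{v = h(v)}| = L|Ω|`, the maximiser of
`u ↦ ∫ u v` over `Ū_L` is unique up to a.e. equality;
(ii) if `h(v) > 0` and `|{v > h(v)}| < L|Ω| < |{v > h(v)}| + |{v = h(v)}|`, there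
are at least two maximisers that are not a.e. equal;
(iii) if `h(v) = 0`, `|{v = 0}| > 0` and `|{v > 0}| < L|Ω|`, there are at least two
maximisers that are not a.e. equal. -/
theorem relaxed_bathtub_uniqueness_criterion
    (d : ℕ) (hd : 1 ≤ d)
    (Ω : Set (Fin d → ℝ)) (hΩne : Ω.Nonempty) (hΩop : IsOpen Ω)
    (hΩbd : Bornology.IsBounded Ω)
    (L : ℝ) (hL : L ∈ Set.Ioo (0 : ℝ) 1)
    (μ : Measure (Fin d → ℝ)) (hμ : μ = volume.restrict Ω)
    (v : (Fin d → ℝ) → ℝ) (hv : MemLp v 2 μ)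
    (Φ : ℝ → ℝ) (hΦ : ∀ r : ℝ, Φ r = (μ {x | v x > r}).toReal)
    (Φinv : ℝ → ℝ) (hΦinv : ∀ s : ℝ, Φinv s = sInf {r : ℝ | Φ r ≤ s})
    (A : ℝ) (hA : A = L * (volume Ω).toReal)
    (hvv : ℝ) (hhv : hvv = max 0 (Φinv A))
    (IsMax : ((Fin d → ℝ) → ℝ) → Prop)
    (hIsMax : ∀ u : (Fin d → ℝ) → ℝ,
      IsMax u ↔ (MemLp u 2 μ ∧ (∀ᵐ x ∂μ, 0 ≤ u x ∧ u x ≤ 1) ∧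
        (∫ x, u x ∂μ) ≤ A ∧
        (∀ w : (Fin d → ℝ) → ℝ, MemLp w 2 μ →
          (∀ᵐ x ∂μ, 0 ≤ w x ∧ w x ≤ 1) → (∫ x, w x ∂μ) ≤ A →
          (∫ x, w x * v x ∂μ) ≤ ∫ x, u x * v x ∂μ))) :
    (0 < hvv →
      (μ {y | v y > hvv}).toReal + (μ {y | v y = hvv}).toReal = A →
      ∀ u₁ u₂ : (Fin d → ℝ) → ℝ, IsMax u₁ → IsMax u₂ → u₁ =ᵐ[μ] u₂) ∧
    (0 < hvv →
      (μ {y | v y > hvv}).toReal < A →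
      A < (μ {y | v y > hvv}).toReal + (μ {y | v y = hvv}).toReal →
      ∃ u₁ u₂ : (Fin d → ℝ) → ℝ, IsMax u₁ ∧ IsMax u₂ ∧ ¬ u₁ =ᵐ[μ] u₂) ∧
    (hvv = 0 →
      0 < μ {y | v y = 0} →
      (μ {y | v y > 0}).toReal < A →
      ∃ u₁ u₂ : (Fin d → ℝ) → ℝ, IsMax u₁ ∧ IsMax u₂ ∧ ¬ u₁ =ᵐ[μ] u₂) :=
  relaxed_bathtub_uniqueness_criterion_general d hd Ω hΩbd μ hμ v hv A hvv IsMax hIsMax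
end
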